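/- arXiv:cs/0011016 — 10 statements merged into one kernel-verified Lean document; each statement's English description precedes it below -/
import Mathlib

section
/- Let ε be a real number with 0 < ε < 1, let m and k be positive integers with 3k ≤ m, and set c₀ = ⌈(1−ε)/ε⌉ and c₁ = c₀ + m. Consider m stock prices p₁,…,p_m with p_i = c₀ for 1 ≤ i ≤ m−1 and p_m = c₁ (row m is the adjustment row); the market average (p₁+⋯+p_m)/m equals c₀+1. Then for every nonempty subset T ⊆ {1,…,m} with |T| ≤ k, the relative-error condition 1−ε ≤ ((∑_{i∈T} p_i)/|T|)/(c₀+1) ≤ 1+ε holds if and only if m ∉ T. -/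
theorem stmt_1 (ε : ℝ) (hε0 : 0 < ε) (hε1 : ε < 1)
    (m k : ℕ) (hm : 0 < m) (hk : 0 < k) (hkm : 3 * k ≤ m)
    (c₀ c₁ : ℝ) (hc₀ : c₀ = (⌈(1 - ε) / ε⌉ : ℤ)) (hc₁ : c₁ = c₀ + m)
    (p : ℕ → ℝ) (hp : ∀ i, 1 ≤ i → i < m → p i = c₀) (hpm : p m = c₁)
    (havg : (∑ i ∈ Finset.Icc 1 m, p i) / m = c₀ + 1)
    (T : Finset ℕ) (hT : T ⊆ Finset.Icc 1 m) (hTne : T.Nonempty)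
    (hTk : T.card ≤ k) :
    (1 - ε ≤ ((∑ i ∈ T, p i) / T.card) / (c₀ + 1) ∧
      ((∑ i ∈ T, p i) / T.card) / (c₀ + 1) ≤ 1 + ε) ↔ m ∉ T := by
  have hx0 : 0 < (1 - ε) / ε := div_pos (by linarith) hε0
  have hc0_ge : (1 - ε) / ε ≤ c₀ := by rw [hc₀]; exact Int.le_ceil _
  have hc0_lt : c₀ < (1 - ε) / ε + 1 := by
    rw [hc₀]; exact Int.ceil_lt_add_one _
  have hc0_one : 1 ≤ c₀ := by
    rw [hc₀]
    have : (0 : ℤ) < ⌈(1 - ε) / ε⌉ := Int.ceil_pos.mpr hx0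
    exact_mod_cast this
  have hεx : ε * ((1 - ε) / ε) = 1 - ε := by field_simp
  have hεc0_ge : 1 - ε ≤ ε * c₀ := by nlinarith
  have hεc0_lt : ε * c₀ < 1 := by nlinarith
  have hc0pos : 0 < c₀ + 1 := by linarith
  have hn1 : 1 ≤ T.card := hTne.card_pos
  have hnr : (1 : ℝ) ≤ (T.card : ℝ) := by exact_mod_cast hn1
  have hnne : (T.card : ℝ) ≠ 0 := by positivity
  have hmn : 3 * (T.card : ℝ) ≤ (m : ℝ) := by
    have : 3 * T.card ≤ m := le_trans (by omega) hkm
    exact_mod_cast this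
  by_cases hmT : m ∈ T
  · simp only [hmT, not_true_eq_false, iff_false, not_and]
    intro _
    have hsum : ∑ i ∈ T, p i = c₀ * T.card + m := by
      rw [← Finset.add_sum_erase T p hmT, hpm, hc₁]
      have hrest : ∑ i ∈ T.erase m, p i = c₀ * ((T.erase m).card : ℝ) := by
        rw [Finset.sum_congr rfl (fun i hi => ?_), Finset.sum_const,
          nsmul_eq_mul, mul_comm]
        have hi' := hT (Finset.mem_of_mem_erase hi)
        rw [Finset.mem_Icc] at hi'
        exact hp i hi'.1 (lt_of_le_of_ne hi'.2 (Finset.ne_of_mem_erase hi))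
      rw [hrest, Finset.card_erase_of_mem hmT]
      have : ((T.card - 1 : ℕ) : ℝ) = (T.card : ℝ) - 1 := by
        have := hn1; push_cast [Nat.cast_sub hn1]; ring
      rw [this]; ring
    rw [hsum, div_div, not_le, lt_div_iff₀ (by positivity)]
    nlinarith
  · simp only [hmT, not_false_eq_true, iff_true]
    have hsum : ∑ i ∈ T, p i = c₀ * T.card := by
      rw [Finset.sum_congr rfl (fun i hi => ?_), Finset.sum_const,
        nsmul_eq_mul, mul_comm]
      have hi' := hT hi
      rw [Finset.mem_Icc] at hi'
      exact hp i hi'.1 (lt_of_le_of_ne hi'.2 (fun h => hmT (h ▸ hi)))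
    rw [hsum, mul_div_assoc, div_self hnne, mul_one]
    constructor
    · rw [le_div_iff₀ hc0pos]; nlinarith
    · rw [div_le_iff₀ hc0pos]; nlinarith
end

section
/- Let ε be a real number with 0 < ε < 1, let k be a positive integer, and set v₀ = ⌈k(1−ε)/ε⌉, Δ = k + ⌈ε/(1−ε)⌉, and v₁ = v₀ + Δ. Let j be an integer with 1 ≤ j ≤ k and let x₁,…,x_j be values each equal to v₀ or v₁, with average A = (x₁+⋯+x_j)/j. Then 1−ε ≤ A/v₁ ≤ 1+ε holds if and only if x_i = v₁ for at least one index i. -/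
set_option maxHeartbeats 1000000


theorem stmt_3 (ε : ℝ) (hε0 : 0 < ε) (hε1 : ε < 1) (k : ℕ) (hk : 0 < k)
    (v₀ Δ v₁ : ℝ)
    (hv₀ : v₀ = (⌈(k : ℝ) * (1 - ε) / ε⌉ : ℤ))
    (hΔ : Δ = (k : ℝ) + (⌈ε / (1 - ε)⌉ : ℤ))
    (hv₁ : v₁ = v₀ + Δ)
    (j : ℕ) (hj1 : 1 ≤ j) (hjk : j ≤ k)
    (x : ℕ → ℝ) (hx : ∀ i ∈ Finset.Icc 1 j, x i = v₀ ∨ x i = v₁)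
    (A : ℝ) (hA : A = (∑ i ∈ Finset.Icc 1 j, x i) / j) :
    (1 - ε ≤ A / v₁ ∧ A / v₁ ≤ 1 + ε) ↔ ∃ i ∈ Finset.Icc 1 j, x i = v₁ := by
  subst hv₁
  have hu : (0:ℝ) < 1 - ε := by linarith
  obtain ⟨c, hc⟩ : ∃ c : ℝ, c = ((⌈ε / (1 - ε)⌉ : ℤ) : ℝ) := ⟨_, rfl⟩
  rw [← hc] at hΔ
  have hK1 : (1:ℝ) ≤ (k:ℝ) := by exact_mod_cast hk
  have hc1 : ε ≤ (1 - ε) * c := by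
    have h := Int.le_ceil (ε / (1 - ε))
    rw [div_le_iff₀ hu] at h
    rw [hc]; linarith
  have hc2 : (1 - ε) * c < 1 := by
    have h : c < ε / (1 - ε) + 1 := by rw [hc]; exact Int.ceil_lt_add_one _
    have h2 : (1 - ε) * c < (1 - ε) * (ε / (1 - ε) + 1) :=
      mul_lt_mul_of_pos_left h hu
    have h3 : (1 - ε) * (ε / (1 - ε)) = ε := by field_simp
    nlinarith
  have hcpos : 0 < c := by nlinarith
  have h1 : (k:ℝ) * (1 - ε) ≤ ε * v₀ := by
    have h := Int.le_ceil ((k:ℝ) * (1 - ε) / ε)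
    rw [div_le_iff₀ hε0, ← hv₀] at h
    linarith
  have h2 : ε * v₀ < (k:ℝ) * (1 - ε) + ε := by
    have h : v₀ < (k:ℝ) * (1 - ε) / ε + 1 := by
      rw [hv₀]; exact Int.ceil_lt_add_one _
    have h3 : ε * ((k:ℝ) * (1 - ε) / ε) = (k:ℝ) * (1 - ε) := by field_simp
    nlinarith
  clear hc hv₀
  have hv₀pos : 0 < v₀ := by nlinarith
  have hΔpos : 0 < Δ := by rw [hΔ]; nlinarith
  have hv₁pos : 0 < v₀ + Δ := by linarith
  have hjR : (1:ℝ) ≤ (j:ℝ) := by exact_mod_cast hj1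
  have hjpos : (0:ℝ) < (j:ℝ) := by linarith
  have hKj : (j:ℝ) ≤ (k:ℝ) := by exact_mod_cast hjk
  constructor
  · rintro ⟨hL, hR⟩
    by_contra hno
    push_neg at hno
    have hall : ∀ i ∈ Finset.Icc 1 j, x i = v₀ := fun i hi =>
      (hx i hi).resolve_right (hno i hi)
    have hcard : (Finset.Icc 1 j).card = j := by simp
    have hS : ∑ i ∈ Finset.Icc 1 j, x i = (j:ℝ) * v₀ := by
      rw [Finset.sum_congr rfl hall, Finset.sum_const, hcard, nsmul_eq_mul]
    have hAv : A = v₀ := by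
      rw [hA, hS, mul_div_cancel_left₀ _ hjpos.ne']
    rw [hAv, le_div_iff₀ hv₁pos] at hL
    rw [hΔ] at hL
    nlinarith [hL, h2, hc1]
  · rintro ⟨i₀, hi₀, hx₀⟩
    have hv₀lt : v₀ < v₀ + Δ := by linarith
    have hSup : ∑ i ∈ Finset.Icc 1 j, x i ≤ (j:ℝ) * (v₀ + Δ) := by
      have hcard : (Finset.Icc 1 j).card = j := by simp
      calc ∑ i ∈ Finset.Icc 1 j, x i ≤ ∑ i ∈ Finset.Icc 1 j, (v₀ + Δ) := by
            apply Finset.sum_le_sum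
            intro i hi
            rcases hx i hi with h | h <;> rw [h]
            exact le_of_lt hv₀lt
        _ = (j:ℝ) * (v₀ + Δ) := by rw [Finset.sum_const, hcard, nsmul_eq_mul]
    have hAup : A ≤ v₀ + Δ := by
      rw [hA, div_le_iff₀ hjpos]
      linarith [hSup]
    have hSlow : (v₀ + Δ) + ((j:ℝ) - 1) * v₀ ≤ ∑ i ∈ Finset.Icc 1 j, x i := by
      rw [← Finset.add_sum_erase _ x hi₀, hx₀]
      have hcard : ((Finset.Icc 1 j).erase i₀).card = j - 1 := by
        rw [Finset.card_erase_of_mem hi₀]; simp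
      have hlow : ((j - 1 : ℕ) : ℝ) * v₀ ≤ ∑ i ∈ (Finset.Icc 1 j).erase i₀, x i := by
        have := Finset.card_nsmul_le_sum ((Finset.Icc 1 j).erase i₀) x v₀
          (fun i hi => by
            rcases hx i (Finset.mem_of_mem_erase hi) with h | h <;> rw [h]
            exact le_of_lt hv₀lt)
        rwa [hcard, nsmul_eq_mul] at this
      have hcast : ((j - 1 : ℕ) : ℝ) = (j:ℝ) - 1 := by
        push_cast [Nat.cast_sub hj1]; ring
      rw [hcast] at hlow
      linarith
    have hKkey : ((k:ℝ) - 1) * Δ < (k:ℝ) * (ε * (v₀ + Δ)) := by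
      have p1 : (k:ℝ) * ((k:ℝ) * (1 - ε)) ≤ (k:ℝ) * (ε * v₀) :=
        mul_le_mul_of_nonneg_left h1 (by linarith)
      have p2 : (k:ℝ) * ((1 - ε) * c) < (k:ℝ) * 1 :=
        mul_lt_mul_of_pos_left hc2 (by linarith)
      rw [hΔ]
      nlinarith [p1, p2, hcpos]
    have hkey : ((j:ℝ) - 1) * Δ ≤ (j:ℝ) * (ε * (v₀ + Δ)) := by
      rcases le_or_gt Δ (ε * (v₀ + Δ)) with h | h
      · nlinarith [hΔpos, hjR]
      · nlinarith [hKkey, mul_nonneg (by linarith : (0:ℝ) ≤ (k:ℝ) - (j:ℝ))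
          (by linarith : (0:ℝ) ≤ Δ - ε * (v₀ + Δ))]
    have hAlow : (1 - ε) * (v₀ + Δ) ≤ A := by
      rw [hA, le_div_iff₀ hjpos]
      nlinarith [hSlow, hkey]
    constructor
    · rw [le_div_iff₀ hv₁pos]
      linarith
    · rw [div_le_iff₀ hv₁pos]
      nlinarith [hAup, hε0, hv₁pos]
end

section
/- For every minimum-cover instance (S, C₁,…,C_n, K) and every real ε with 0 < ε < 1, the constructed tracking instance satisfies: there exist at most K of the sets C₁,…,C_n whose union is S if and only if there exists a nonempty subset T ⊆ {1,…,m} with |T| ≤ k such that |Φ₁(T,t)/Φ₁(T,0) − Φ₁(M,t)/Φ₁(M,0)| ≤ ε·Φ₁(M,t)/Φ₁(M,0) for every t = 1,…,s+1. -/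
section Aux

private lemma aux_abs (ε V x : ℝ) (h1 : (1-ε)*V ≤ x) (h2 : x ≤ (1+ε)*V) :
    |x - V| ≤ ε*V := by
  rw [abs_sub_le_iff]; constructor <;> nlinarith

private lemma aux_ctrl1 (ε c₀ : ℝ) (hεc₀ : 1-ε ≤ ε*c₀) (hc₀ : 0 ≤ c₀) :
    |c₀ - (c₀+1)| ≤ ε*(c₀+1) := by
  rw [show c₀-(c₀+1) = -(1:ℝ) by ring, abs_neg, abs_one]; nlinarith

private lemma aux_E (ε v₀ qr Δ kR : ℝ) (hεv₀' : ε*v₀ < kR*(1-ε)+ε)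
    (hqε : ε ≤ (1-ε)*qr) (hΔeq : Δ = kR + qr) : ε*v₀ < (1-ε)*Δ := by
  rw [hΔeq]; nlinarith

private lemma aux_low (ε kR v₀ qr Δ c a : ℝ) (hε1 : ε < 1) (hk1 : 1 ≤ kR)
    (hεv₀ : kR*(1-ε) ≤ ε*v₀) (hq1 : (1-ε)*qr < 1) (hq0 : 0 ≤ qr)
    (hΔeq : Δ = kR + qr) (hΔpos : 0 < Δ)
    (h1 : 1 ≤ c) (h2 : c ≤ kR) (h3 : 1 ≤ a) :
    (1-ε)*(v₀+Δ)*c ≤ c*v₀ + a*Δ := by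
  have e1 : c*((1-ε)*Δ - ε*v₀) ≤ c*((1-ε)*qr) := by
    apply mul_le_mul_of_nonneg_left _ (by linarith)
    rw [hΔeq]; nlinarith
  have e2 : c*((1-ε)*qr) ≤ kR*((1-ε)*qr) := by
    apply mul_le_mul_of_nonneg_right h2
    nlinarith
  have e3 : kR*((1-ε)*qr) < Δ := by
    rw [hΔeq]
    nlinarith [mul_lt_mul_of_pos_left hq1 (by linarith : (0:ℝ) < kR)]
  have e4 : Δ ≤ a*Δ := by nlinarith
  nlinarith [e1, e2, e3, e4]

private lemma aux_up (ε v₀ Δ c a : ℝ) (hε0 : 0 < ε) (hv₀ : 0 < v₀) (hΔpos : 0 < Δ)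
    (h1 : 0 < c) (h2 : 0 ≤ a) (h3 : a ≤ c) : c*v₀ + a*Δ ≤ (1+ε)*(v₀+Δ)*c := by
  nlinarith [mul_le_mul_of_nonneg_right h3 hΔpos.le,
    mul_pos (mul_pos hε0 (by linarith : (0:ℝ) < v₀+Δ)) h1]

private lemma aux_m (ε c₀ x : ℝ) (hεc₀' : ε*c₀ < 1) (hε1 : ε < 1)
    (habs : c₀ + x - (c₀+1) ≤ ε*(c₀+1)) (hmc : 3 ≤ x) : False := by nlinarith

private lemma aux_a0 (ε v₀ Δ : ℝ) (hl : -(ε*(v₀+Δ)) ≤ v₀ - (v₀+Δ))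
    (hE : ε*v₀ < (1-ε)*Δ) : False := by nlinarith

end Aux



/-- Price-weighted index of the set of stocks `T` at time `t`,
given prices `Sp`. -/
noncomputable def phi1 (Sp : ℕ → ℕ → ℝ) (T : Finset ℕ) (t : ℕ) : ℝ :=
  (∑ i ∈ T, Sp i t) / T.card

theorem stmt_4
    -- the minimum-cover instance
    (s n K : ℕ) (hs : 1 ≤ s) (C : ℕ → Finset ℕ)
    (hC : ∀ i ∈ Finset.Icc 1 n, C i ⊆ Finset.Icc 1 s)
    (hK1 : 1 ≤ K) (hKn : K ≤ n)
    -- the error bound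
    (ε : ℝ) (hε0 : 0 < ε) (hε1 : ε < 1)
    -- constants of the construction
    (k m : ℕ) (hk : k = K) (hm : m = 3 * n)
    (c₀ c₁ v₀ Δ v₁ : ℝ)
    (hc₀ : c₀ = (⌈(1 - ε) / ε⌉ : ℤ)) (hc₁ : c₁ = c₀ + m)
    (hv₀ : v₀ = (⌈(k : ℝ) * (1 - ε) / ε⌉ : ℤ))
    (hΔ : Δ = (k : ℝ) + (⌈ε / (1 - ε)⌉ : ℤ))
    (hv₁ : v₁ = v₀ + Δ)
    -- the constructed prices
    (Sp : ℕ → ℕ → ℝ)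
    (h0 : ∀ i ∈ Finset.Icc 1 m, Sp i 0 = 1)
    (hctrl : Sp m 1 = c₁ ∧ ∀ i, 1 ≤ i → i < m → Sp i 1 = c₀)
    (helem : ∀ j ∈ Finset.Icc 1 s,
      (∀ i, 1 ≤ i → i ≤ n → Sp i (j + 1) = if j ∈ C i then v₁ else v₀) ∧
      (∀ i, n < i → i < m → Sp i (j + 1) = v₀) ∧
      Sp m (j + 1) = v₀ +
        ((m : ℝ) - ((Finset.Icc 1 n).filter (fun i => j ∈ C i)).card) * Δ) :
    -- the equivalence: a small cover exists iff a small tracking portfolio exists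
    (∃ I ⊆ Finset.Icc 1 n, I.card ≤ K ∧
        ∀ j ∈ Finset.Icc 1 s, ∃ i ∈ I, j ∈ C i) ↔
      (∃ T ⊆ Finset.Icc 1 m, T.Nonempty ∧ T.card ≤ k ∧
        ∀ t ∈ Finset.Icc 1 (s + 1),
          |phi1 Sp T t / phi1 Sp T 0 -
              phi1 Sp (Finset.Icc 1 m) t / phi1 Sp (Finset.Icc 1 m) 0| ≤
            ε * (phi1 Sp (Finset.Icc 1 m) t / phi1 Sp (Finset.Icc 1 m) 0)) := by
  classical
  have hn1 : 1 ≤ n := le_trans hK1 hKn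
  have hnm : n < m := by omega
  have hm1 : 1 ≤ m := by omega
  have hk1 : 1 ≤ k := by omega
  have hkn : k ≤ n := by omega
  have hε1' : (0:ℝ) < 1 - ε := by linarith
  have hk1r : (1:ℝ) ≤ (k:ℝ) := by exact_mod_cast hk1
  have hkpos : (0:ℝ) < (k:ℝ) := by linarith
  set qr : ℝ := ((⌈ε / (1 - ε)⌉ : ℤ) : ℝ) with hqr
  -- ceiling facts
  have hc₀ge : (1 - ε) / ε ≤ c₀ := by rw [hc₀]; exact Int.le_ceil _
  have hc₀lt : c₀ < (1 - ε) / ε + 1 := by rw [hc₀]; exact Int.ceil_lt_add_one _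
  have hεc₀ : 1 - ε ≤ ε * c₀ := by rw [div_le_iff₀ hε0] at hc₀ge; linarith
  have hεc₀' : ε * c₀ < 1 := by
    have h := mul_lt_mul_of_pos_left hc₀lt hε0
    rw [mul_add, mul_one, mul_comm ε ((1-ε)/ε), div_mul_cancel₀ _ (ne_of_gt hε0)] at h
    linarith
  have hc₀pos : (0:ℝ) ≤ c₀ := le_trans (by positivity) hc₀ge
  have hv₀ge : (k:ℝ) * (1 - ε) / ε ≤ v₀ := by rw [hv₀]; exact Int.le_ceil _
  have hv₀lt : v₀ < (k:ℝ) * (1 - ε) / ε + 1 := by rw [hv₀]; exact Int.ceil_lt_add_one _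
  have hεv₀ : (k:ℝ) * (1 - ε) ≤ ε * v₀ := by rw [div_le_iff₀ hε0] at hv₀ge; linarith
  have hεv₀' : ε * v₀ < (k:ℝ) * (1 - ε) + ε := by
    have h := mul_lt_mul_of_pos_left hv₀lt hε0
    rw [mul_add, mul_one, mul_comm ε ((k:ℝ)*(1-ε)/ε), div_mul_cancel₀ _ (ne_of_gt hε0)] at h
    linarith
  have hv₀pos : (0:ℝ) < v₀ := lt_of_lt_of_le (by positivity) hv₀ge
  have hqge : ε / (1 - ε) ≤ qr := Int.le_ceil _
  have hqlt : qr < ε / (1 - ε) + 1 := Int.ceil_lt_add_one _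
  have hqε : ε ≤ (1 - ε) * qr := by rw [div_le_iff₀ hε1'] at hqge; linarith
  have hq1 : (1 - ε) * qr < 1 := by
    have h := mul_lt_mul_of_pos_left hqlt hε1'
    rw [mul_add, mul_one, mul_comm (1-ε) (ε/(1-ε)), div_mul_cancel₀ _ (ne_of_gt hε1')] at h
    linarith
  have hq0 : (0:ℝ) ≤ qr := le_trans (by positivity) hqge
  clear_value qr
  have hΔeq : Δ = (k:ℝ) + qr := hΔ
  have hΔpos : (0:ℝ) < Δ := by rw [hΔeq]; linarith
  -- basic set facts
  have hMins : Finset.Icc 1 m = insert m (Finset.Icc 1 (m-1)) := by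
    ext i; simp only [Finset.mem_Icc, Finset.mem_insert]; omega
  have hmnot : m ∉ Finset.Icc 1 (m-1) := by simp only [Finset.mem_Icc]; omega
  have hsubm : Finset.Icc 1 (m-1) ⊆ Finset.Icc 1 m :=
    Finset.Icc_subset_Icc_right (by omega)
  have hcardm1 : ((Finset.Icc 1 (m-1)).card : ℝ) = (m:ℝ) - 1 := by
    rw [Nat.card_Icc]
    have h' : m - 1 + 1 - 1 = m - 1 := by omega
    rw [h', Nat.cast_sub hm1, Nat.cast_one]
  have hcardM : ((Finset.Icc 1 m).card : ℝ) = (m:ℝ) := by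
    rw [Nat.card_Icc]; norm_num
  have hmR : (1:ℝ) ≤ (m:ℝ) := by exact_mod_cast hm1
  -- φ at time 0
  have hphi0 : ∀ T : Finset ℕ, T ⊆ Finset.Icc 1 m → T.Nonempty → phi1 Sp T 0 = 1 := by
    intro T hT hTne
    unfold phi1
    rw [Finset.sum_congr rfl (fun i hi => h0 i (hT hi)), Finset.sum_const, nsmul_eq_mul,
      mul_one]
    exact div_self (by exact_mod_cast hTne.card_pos.ne')
  -- sums at time 1
  have hsum1 : ∀ T : Finset ℕ, T ⊆ Finset.Icc 1 m → m ∉ T →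
      ∑ i ∈ T, Sp i 1 = T.card * c₀ := by
    intro T hT hmT
    rw [Finset.sum_congr rfl (fun i hi => ?_), Finset.sum_const, nsmul_eq_mul]
    have hi' := hT hi
    rw [Finset.mem_Icc] at hi'
    exact hctrl.2 i hi'.1 (lt_of_le_of_ne hi'.2 (fun h => hmT (h ▸ hi)))
  have hsumM1 : ∑ i ∈ Finset.Icc 1 m, Sp i 1 = m * (c₀ + 1) := by
    rw [hMins, Finset.sum_insert hmnot, hsum1 _ hsubm hmnot, hctrl.1, hc₁, hcardm1]
    ring
  have hsumT1m : ∀ T : Finset ℕ, T ⊆ Finset.Icc 1 m → m ∈ T →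
      ∑ i ∈ T, Sp i 1 = T.card * c₀ + m := by
    intro T hT hmT
    have hT1 : 1 ≤ T.card := Finset.card_pos.mpr ⟨m, hmT⟩
    rw [← Finset.add_sum_erase T _ hmT, hctrl.1,
      hsum1 (T.erase m) ((Finset.erase_subset _ _).trans hT) (Finset.notMem_erase _ _),
      Finset.card_erase_of_mem hmT, hc₁, Nat.cast_sub hT1]
    push_cast
    ring
  -- sums at element times
  have hsum_elem : ∀ j ∈ Finset.Icc 1 s, ∀ T : Finset ℕ, T ⊆ Finset.Icc 1 m → m ∉ T →
      ∑ i ∈ T, Sp i (j+1) =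
        T.card * v₀ + ((T.filter fun i => i ≤ n ∧ j ∈ C i).card) * Δ := by
    intro j hj T hT hmT
    obtain ⟨h1, h2, _⟩ := helem j hj
    have hterm : ∀ i ∈ T, Sp i (j+1) = v₀ + (if i ≤ n ∧ j ∈ C i then Δ else 0) := by
      intro i hi
      have hi' := hT hi
      rw [Finset.mem_Icc] at hi'
      have him : i < m := lt_of_le_of_ne hi'.2 (fun h => hmT (h ▸ hi))
      by_cases hin : i ≤ n
      · rw [h1 i hi'.1 hin]
        by_cases hjc : j ∈ C i
        · simp [hjc, hin, hv₁]
        · simp [hjc]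
      · rw [h2 i (by omega) him]; simp [hin]
    rw [Finset.sum_congr rfl hterm, Finset.sum_add_distrib, Finset.sum_const, nsmul_eq_mul,
      Finset.sum_ite, Finset.sum_const, Finset.sum_const_zero, add_zero, nsmul_eq_mul]
  have hsumMelem : ∀ j ∈ Finset.Icc 1 s,
      ∑ i ∈ Finset.Icc 1 m, Sp i (j+1) = m * (v₀ + Δ) := by
    intro j hj
    obtain ⟨_, _, h3⟩ := helem j hj
    have hfilt : (Finset.Icc 1 (m-1)).filter (fun i => i ≤ n ∧ j ∈ C i)
        = (Finset.Icc 1 n).filter (fun i => j ∈ C i) := by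
      ext i
      simp only [Finset.mem_filter, Finset.mem_Icc]
      constructor
      · rintro ⟨⟨a, b⟩, c, d⟩; exact ⟨⟨a, c⟩, d⟩
      · rintro ⟨⟨a, b⟩, c⟩; exact ⟨⟨a, by omega⟩, by omega, c⟩
    rw [hMins, Finset.sum_insert hmnot, h3, hsum_elem j hj _ hsubm hmnot, hfilt, hcardm1]
    ring
  -- φ values of the market
  have hmne0 : (m:ℝ) ≠ 0 := by linarith
  have hphiM1 : phi1 Sp (Finset.Icc 1 m) 1 = c₀ + 1 := by
    unfold phi1; rw [hsumM1, hcardM, mul_div_cancel_left₀ _ hmne0]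
  have hphiMe : ∀ j ∈ Finset.Icc 1 s, phi1 Sp (Finset.Icc 1 m) (j+1) = v₀ + Δ := by
    intro j hj
    unfold phi1; rw [hsumMelem j hj, hcardM, mul_div_cancel_left₀ _ hmne0]
  -- key scalar inequalities
  have hE : ε*v₀ < (1-ε)*Δ := aux_E ε v₀ qr Δ (k:ℝ) hεv₀' hqε hΔeq
  have hlow : ∀ c a : ℝ, 1 ≤ c → c ≤ (k:ℝ) → 1 ≤ a →
      (1-ε)*(v₀+Δ)*c ≤ c*v₀ + a*Δ := fun c a h1 h2 h3 =>
    aux_low ε (k:ℝ) v₀ qr Δ c a hε1 hk1r hεv₀ hq1 hq0 hΔeq hΔpos h1 h2 h3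
  have hup : ∀ c a : ℝ, 0 < c → 0 ≤ a → a ≤ c → c*v₀ + a*Δ ≤ (1+ε)*(v₀+Δ)*c :=
    fun c a h1 h2 h3 => aux_up ε v₀ Δ c a hε0 hv₀pos hΔpos h1 h2 h3
  have hMne : (Finset.Icc 1 m).Nonempty := ⟨1, by rw [Finset.mem_Icc]; omega⟩
  constructor
  · -- cover → tracking portfolio
    rintro ⟨I, hIsub, hIcard, hIcov⟩
    obtain ⟨i₀, hi₀, _⟩ := hIcov 1 (by rw [Finset.mem_Icc]; omega)
    have hIsub' : I ⊆ Finset.Icc 1 m :=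
      hIsub.trans (Finset.Icc_subset_Icc_right (by omega))
    have hmI : m ∉ I := fun h => by
      have := hIsub h; rw [Finset.mem_Icc] at this; omega
    have hIne : I.Nonempty := ⟨i₀, hi₀⟩
    have hcpos : (0:ℝ) < I.card := by exact_mod_cast hIne.card_pos
    have hc1 : (1:ℝ) ≤ I.card := by exact_mod_cast hIne.card_pos
    have hck : (I.card:ℝ) ≤ (k:ℝ) := by exact_mod_cast (by omega : I.card ≤ k)
    refine ⟨I, hIsub', hIne, by omega, ?_⟩
    intro t ht
    rw [Finset.mem_Icc] at ht
    rw [hphi0 I hIsub' hIne, hphi0 _ (le_refl _) hMne, div_one, div_one]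
    obtain ⟨j, rfl⟩ : ∃ j, t = j + 1 := ⟨t - 1, by omega⟩
    by_cases hj0 : j = 0
    · subst hj0
      have hphiI1 : phi1 Sp I 1 = c₀ := by
        unfold phi1; rw [hsum1 I hIsub' hmI, mul_div_cancel_left₀ _ (ne_of_gt hcpos)]
      rw [show (0+1 : ℕ) = 1 from rfl, hphiI1, hphiM1]
      exact aux_ctrl1 ε c₀ hεc₀ hc₀pos
    · have hjs : j ∈ Finset.Icc 1 s := by rw [Finset.mem_Icc]; omega
      rw [hphiMe j hjs]
      have hphiI : phi1 Sp I (j+1) =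
          ((I.card:ℝ) * v₀ + ((I.filter fun i => i ≤ n ∧ j ∈ C i).card : ℝ) * Δ)
            / (I.card:ℝ) := by
        unfold phi1; rw [hsum_elem j hjs I hIsub' hmI]
      rw [hphiI]
      set a := ((I.filter fun i => i ≤ n ∧ j ∈ C i).card) with ha
      have ha1 : 1 ≤ a := by
        obtain ⟨i, hiI, hiC⟩ := hIcov j hjs
        have hin : i ≤ n := by
          have := hIsub hiI; rw [Finset.mem_Icc] at this; omega
        exact Finset.card_pos.mpr ⟨i, Finset.mem_filter.mpr ⟨hiI, hin, hiC⟩⟩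
      have ha2 : a ≤ I.card := Finset.card_filter_le _ _
      have ha1r : (1:ℝ) ≤ (a:ℝ) := by exact_mod_cast ha1
      have ha2r : ((a:ℕ):ℝ) ≤ (I.card:ℝ) := by exact_mod_cast ha2
      have key1 : (1-ε)*(v₀+Δ) ≤ ((I.card:ℝ)*v₀ + (a:ℝ)*Δ)/(I.card:ℝ) := by
        rw [le_div_iff₀ hcpos]
        exact hlow _ _ hc1 hck ha1r
      have key2 : ((I.card:ℝ)*v₀ + (a:ℝ)*Δ)/(I.card:ℝ) ≤ (1+ε)*(v₀+Δ) := by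
        rw [div_le_iff₀ hcpos]
        exact hup _ _ hcpos (by linarith) ha2r
      exact aux_abs ε (v₀+Δ) _ key1 key2
  · -- tracking portfolio → cover
    rintro ⟨T, hTsub, hTne, hTcard, htr⟩
    have hcpos : (0:ℝ) < T.card := by exact_mod_cast hTne.card_pos
    have hc1 : (1:ℝ) ≤ T.card := by exact_mod_cast hTne.card_pos
    have hck : (T.card:ℝ) ≤ (k:ℝ) := by exact_mod_cast hTcard
    have hmT : m ∉ T := by
      intro hmT
      have h1 := htr 1 (by rw [Finset.mem_Icc]; omega)
      rw [hphi0 T hTsub hTne, hphi0 _ (le_refl _) hMne, div_one, div_one, hphiM1] at h1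
      have hphiT1 : phi1 Sp T 1 = c₀ + (m:ℝ) / T.card := by
        unfold phi1
        rw [hsumT1m T hTsub hmT, add_div, mul_div_cancel_left₀ _ (ne_of_gt hcpos)]
      rw [hphiT1] at h1
      have habs := (abs_le.mp h1).2
      have hmc : (3:ℝ) ≤ (m:ℝ) / T.card := by
        rw [le_div_iff₀ hcpos]
        have hTn : (T.card:ℝ) ≤ (n:ℝ) := by exact_mod_cast hTcard.trans (by omega : k ≤ n)
        have hm3 : (m:ℝ) = 3*(n:ℝ) := by exact_mod_cast hm
        linarith
      exact aux_m ε c₀ ((m:ℝ)/T.card) hεc₀' hε1 habs hmc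
    refine ⟨T.filter (fun i => i ≤ n), ?_, ?_, ?_⟩
    · intro i hi
      rw [Finset.mem_filter] at hi
      have := hTsub hi.1
      rw [Finset.mem_Icc] at this ⊢
      omega
    · exact le_trans (Finset.card_filter_le _ _) (by omega)
    · intro j hj
      have htj := htr (j+1) (by rw [Finset.mem_Icc] at hj ⊢; omega)
      rw [hphi0 T hTsub hTne, hphi0 _ (le_refl _) hMne, div_one, div_one,
        hphiMe j hj] at htj
      by_contra hno
      push_neg at hno
      have ha0 : (T.filter fun i => i ≤ n ∧ j ∈ C i) = ∅ := by
        rw [Finset.filter_eq_empty_iff]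
        rintro i hiT ⟨hin, hjC⟩
        exact hno i (Finset.mem_filter.mpr ⟨hiT, hin⟩) hjC
      have hphiT : phi1 Sp T (j+1) = v₀ := by
        unfold phi1
        rw [hsum_elem j hj T hTsub hmT, ha0, Finset.card_empty, Nat.cast_zero, zero_mul,
          add_zero, mul_div_cancel_left₀ _ (ne_of_gt hcpos)]
      rw [hphiT] at htj
      have hl := (abs_le.mp htj).1
      exact aux_a0 ε v₀ Δ (by linarith) hE
end

section
/- In the constructed instance for sacrificing return for less volatility, a subset T ⊆ {1,…,m} with |T| = k meets the performance bound if and only if T ⊆ {1,…,n} (i.e., T consists of exactly k coding rows) and for every coding column t with P < t ≤ f there exists i ∈ T with S_{i,t} = v₂. -/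
/-- One-period return of the set of stocks `T` at time `t ≥ 1`. -/
noncomputable def ret (Sp : ℕ → ℕ → ℝ) (T : Finset ℕ) (t : ℕ) : ℝ :=
  Real.log (phi1 Sp T t / phi1 Sp T (t - 1))

/-- Average return of the set of stocks `T` up to time `t ≥ 1`. -/
noncomputable def avgRet (Sp : ℕ → ℕ → ℝ) (T : Finset ℕ) (t : ℕ) : ℝ :=
  (∑ i ∈ Finset.Icc 1 t, ret Sp T i) / t

/-- Volatility of the set of stocks `T` up to time `t ≥ 2`. -/
noncomputable def vol (Sp : ℕ → ℕ → ℝ) (T : Finset ℕ) (t : ℕ) : ℝ :=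
  Real.sqrt ((∑ i ∈ Finset.Icc 1 t, (ret Sp T i - avgRet Sp T t) ^ 2) /
    ((t : ℝ) - 1))


/-!
Every stock starts at `v₁`, so the performance bound reads `α Φ(M,t) ≤ Φ(T,t)`. The market index
is `v₁/B` at odd padding columns and `v₁⌊B/α⌋/B` at all other columns; since `α k ≤ B`, the
benchmark `α Φ(M,t)` never exceeds `v₁` but exceeds `(k-1)v₁/k` outside the odd padding columns.
A set of `k` coding rows covering every element has index `v₁` on padding columns and at least
`v₂/k = v₁` on coding columns. Conversely, a portfolio containing a non-coding row misses one of
the adjustment rows `n+1, …, n+k+1`, and at the even padding column of that row at most `k-1`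
of its prices are nonzero, each equal to `v₁`; and at a coding column not covered by `T` the
index of `T` vanishes.
-/

open Finset

section PriceIndex

variable {Sp : ℕ → ℕ → ℝ} {T : Finset ℕ} {t j : ℕ} {c : ℝ}

lemma phi1_eq_of_forall_eq (hT : T.card ≠ 0) (h : ∀ i ∈ T, Sp i t = c) : phi1 Sp T t = c := by
  rw [phi1, sum_congr rfl h, sum_const, nsmul_eq_mul,
    mul_div_cancel_left₀ _ (Nat.cast_ne_zero.2 hT)]

lemma exists_ne_zero_of_phi1_ne_zero (h : phi1 Sp T t ≠ 0) : ∃ i ∈ T, Sp i t ≠ 0 := by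
  by_contra! h'
  exact h (by rw [phi1, sum_eq_zero h', zero_div])

lemma div_card_le_phi1 (h0 : ∀ i ∈ T, 0 ≤ Sp i t) (hj : j ∈ T) :
    Sp j t / T.card ≤ phi1 Sp T t :=
  div_le_div_of_nonneg_right (single_le_sum h0 hj) (Nat.cast_nonneg _)

lemma card_mul_phi1_le (hle : ∀ i ∈ T, Sp i t ≤ c) (hj : j ∈ T) (hj0 : Sp j t = 0) :
    T.card * phi1 Sp T t ≤ (T.card - 1) * c := by
  have hT : 0 < T.card := card_pos.2 ⟨j, hj⟩
  rw [phi1, mul_div_cancel₀ _ (by positivity), ← add_sum_erase T _ hj, hj0, zero_add]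
  calc ∑ i ∈ T.erase j, Sp i t ≤ ∑ _i ∈ T.erase j, c :=
        sum_le_sum fun i hi => hle i (mem_of_mem_erase hi)
    _ = (T.card - 1) * c := by
        rw [sum_const, card_erase_of_mem hj, nsmul_eq_mul, Nat.cast_sub hT, Nat.cast_one]

lemma phi1_Icc_eq_of_single {n m r : ℕ} (hnr : n < r) (hrm : r ≤ m)
    (h : ∀ i, n < i → i ≤ m → i ≠ r → Sp i t = 0) :
    phi1 Sp (Icc 1 m) t = (∑ i ∈ Icc 1 n, Sp i t + Sp r t) / m := by
  have hIoc : ∑ i ∈ Ioc n m, Sp i t = Sp r t :=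
    sum_eq_single_of_mem r (mem_Ioc.2 ⟨hnr, hrm⟩) fun i hi hne =>
      h i (mem_Ioc.1 hi).1 (mem_Ioc.1 hi).2 hne
  rw [phi1, Nat.card_Icc, Nat.add_sub_cancel, ← hIoc, ← zero_add 1, Icc_add_one_left_eq_Ioc,
    Icc_add_one_left_eq_Ioc, sum_Ioc_consecutive _ n.zero_le (hnr.trans_le hrm).le]

end PriceIndex

section Floor

variable {α B : ℝ}

lemma mul_floor_div_le (hα : 0 < α) : α * ⌊B / α⌋ ≤ B :=
  calc α * ⌊B / α⌋ ≤ α * (B / α) := by gcongr; exact Int.floor_le _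
    _ = B := mul_div_cancel₀ B hα.ne'

lemma sub_one_mul_lt_mul_floor_div {k : ℝ} (hα : 0 < α) (hk : 0 < k) (h : α * k ≤ B) :
    (k - 1) * B < α * k * ⌊B / α⌋ :=
  calc (k - 1) * B ≤ α * k * (B / α - 1) := by
        rw [mul_sub, mul_comm α k, mul_assoc, mul_div_cancel₀ B hα.ne']; linarith
    _ < α * k * ⌊B / α⌋ := by gcongr; exact Int.sub_one_lt_floor _

lemma alpha_mul_div_floor_le_and_lt {k v : ℝ} (hα : 0 < α) (hk : 0 < k) (hαk : α * k ≤ B)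
    (hv : 0 < v) :
    α * (v * ⌊B / α⌋ / B) ≤ v ∧ (k - 1) * v < k * (α * (v * ⌊B / α⌋ / B)) := by
  have hB : 0 < B := (mul_pos hα hk).trans_le hαk
  have hαF := mul_floor_div_le (B := B) hα
  have hkF := sub_one_mul_lt_mul_floor_div hα hk hαk
  constructor
  · rw [mul_div_assoc', div_le_iff₀ hB]
    nlinarith
  · rw [mul_div_assoc', mul_div_assoc', lt_div_iff₀ hB]
    nlinarith

end Floor

lemma two_le_and_mul_le_of_eq_ceil {α β : ℝ} {k q B : ℕ} (hα : 0 < α) (hβ : 0 < β) (hk : 2 ≤ k)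
    (hq : (q : ℤ) = ⌈max (1 + 4 / β) (Real.log (2 / α) / Real.log k)⌉)
    (hB : (B : ℤ) = ⌈α * (k : ℝ) ^ q⌉) : 2 ≤ (B : ℝ) ∧ α * k ≤ B := by
  have hk1 : (1 : ℝ) < k := by exact_mod_cast hk
  have hqmax := Int.le_ceil (max (1 + 4 / β) (Real.log (2 / α) / Real.log k))
  have hBge := Int.le_ceil (α * (k : ℝ) ^ q)
  rw [← hq, Int.cast_natCast] at hqmax
  rw [← hB, Int.cast_natCast] at hBge
  have hq1 : 1 ≤ q := by
    have : 0 < 4 / β := by positivity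
    exact_mod_cast (show (1 : ℝ) ≤ q by linarith [le_of_max_le_left hqmax])
  constructor
  · have := (Real.le_pow_iff_log_le (by positivity) (by positivity)).2
      ((div_le_iff₀ (Real.log_pos hk1)).1 (le_of_max_le_right hqmax))
    calc (2 : ℝ) = α * (2 / α) := (mul_div_cancel₀ 2 hα.ne').symm
      _ ≤ α * k ^ q := by gcongr
      _ ≤ B := hBge
  · calc α * k = α * k ^ 1 := by rw [pow_one]
      _ ≤ α * k ^ q := by gcongr; exact hk1.le
      _ ≤ B := hBge

section Market

variable {Sp : ℕ → ℕ → ℝ} {n m t : ℕ} {B v₁ F : ℝ}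

lemma phi1_market_of_padding_odd (hnm : n < m) (hm : (m : ℝ) = n * B)
    (hcod : ∀ i ∈ Icc 1 n, Sp i t = v₁) (hrest : ∀ i, n < i → i ≤ m → Sp i t = 0) :
    phi1 Sp (Icc 1 m) t = v₁ / B := by
  have hnB : (n : ℝ) * B ≠ 0 := hm ▸ Nat.cast_ne_zero.2 (n.zero_le.trans_lt hnm).ne'
  rw [phi1_Icc_eq_of_single hnm le_rfl fun i h1 h2 _ => hrest i h1 h2, sum_congr rfl hcod,
    hrest m hnm le_rfl, sum_const, Nat.card_Icc, Nat.add_sub_cancel, nsmul_eq_mul, add_zero, hm,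
    mul_div_mul_left _ _ (left_ne_zero_of_mul hnB)]

lemma phi1_market_of_padding_even {r : ℕ} (hnr : n < r) (hrm : r ≤ m) (hm : (m : ℝ) = n * B)
    (hv₁ : v₁ = B - 1) (hcod : ∀ i ∈ Icc 1 n, Sp i t = v₁) (hr : Sp r t = (m - n) * (F - 1))
    (hrest : ∀ i, n < i → i ≤ m → i ≠ r → Sp i t = 0) :
    phi1 Sp (Icc 1 m) t = v₁ * F / B := by
  have hnB : (n : ℝ) * B ≠ 0 := hm ▸ Nat.cast_ne_zero.2 (n.zero_le.trans_lt (hnr.trans_le hrm)).ne'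
  rw [phi1_Icc_eq_of_single hnr hrm hrest, sum_congr rfl hcod, hr, sum_const, Nat.card_Icc,
    Nat.add_sub_cancel, nsmul_eq_mul, hm, div_eq_div_iff hnB (right_ne_zero_of_mul hnB)]
  linear_combination (n * B * (1 - F)) * hv₁

lemma phi1_market_of_coding {k e : ℕ} {v₂ : ℝ} {C : ℕ → Finset ℕ} (hnm : n < m)
    (hm : (m : ℝ) = n * B) (hv₁ : v₁ = B - 1) (hv₂ : v₂ = k * v₁)
    (hcod : ∀ i ∈ Icc 1 n, Sp i t = if e ∈ C i then v₂ else 0)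
    (hrest : ∀ i, n < i → i < m → Sp i t = 0)
    (hlast : Sp m t = (m - n) * (F - k) + ((Icc 1 n).filter fun i => e ∉ C i).card * v₂) :
    phi1 Sp (Icc 1 m) t = v₁ * F / B := by
  have hnB : (n : ℝ) * B ≠ 0 := hm ▸ Nat.cast_ne_zero.2 (n.zero_le.trans_lt hnm).ne'
  have hcard : (((Icc 1 n).filter fun i => e ∈ C i).card : ℝ) +
      ((Icc 1 n).filter fun i => e ∉ C i).card = n := by
    exact_mod_cast (card_filter_add_card_filter_not (s := Icc 1 n) (fun i => e ∈ C i)).trans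
      (by simp)
  rw [phi1_Icc_eq_of_single hnm le_rfl fun i h1 h2 hne => hrest i h1 (lt_of_le_of_ne h2 hne),
    sum_congr rfl hcod, ← sum_filter, sum_const, nsmul_eq_mul, hlast, hm]
  rw [div_eq_div_iff hnB (right_ne_zero_of_mul hnB)]
  linear_combination (B * v₂) * hcard + (n * B) * hv₂ - (n * B * (F - k)) * hv₁

lemma phi1_market_eq {Sp : ℕ → ℕ → ℝ} {C : ℕ → Finset ℕ} {n m k P f : ℕ} {B F v₁ v₂ : ℝ}
    (hnm : n < m) (hm : (m : ℝ) = n * B) (hv₁ : v₁ = B - 1) (hv₂ : v₂ = k * v₁)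
    (hpad1 : ∀ t, 1 ≤ t → t ≤ P → ∀ i ∈ Icc 1 n, Sp i t = v₁)
    (hpadEven : ∀ t, 1 ≤ t → t ≤ P → t % 2 = 0 →
      Sp (min (n + t / 2) m) t = (m - n) * (F - 1) ∧
      ∀ i, n < i → i ≤ m → i ≠ min (n + t / 2) m → Sp i t = 0)
    (hpadOdd : ∀ t, 1 ≤ t → t ≤ P → t % 2 = 1 → ∀ i, n < i → i ≤ m → Sp i t = 0)
    (hcode : ∀ t, P < t → t ≤ f →
      (∀ i ∈ Icc 1 n, Sp i t = if t - P ∈ C i then v₂ else 0) ∧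
      (∀ i, n < i → i < m → Sp i t = 0) ∧
      Sp m t = (m - n) * (F - k) + ((Icc 1 n).filter fun i => t - P ∉ C i).card * v₂) :
    ∀ t ∈ Icc 1 f, phi1 Sp (Icc 1 m) t = if t ≤ P ∧ t % 2 = 1 then v₁ / B else v₁ * F / B := by
  intro t ht
  obtain ⟨ht1, htf⟩ := mem_Icc.1 ht
  rcases le_or_gt t P with htP | htP
  · rcases Nat.mod_two_eq_zero_or_one t with ht2 | ht2
    · obtain ⟨hr, hrest⟩ := hpadEven t ht1 htP ht2
      rw [if_neg (by omega)]
      exact phi1_market_of_padding_even (by omega) (min_le_right _ _) hm hv₁ (hpad1 t ht1 htP) hr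
        hrest
    · rw [if_pos ⟨htP, ht2⟩]
      exact phi1_market_of_padding_odd hnm hm (hpad1 t ht1 htP) (hpadOdd t ht1 htP ht2)
  · obtain ⟨hcod, hrest, hlast⟩ := hcode t htP htf
    rw [if_neg (by omega)]
    exact phi1_market_of_coding hnm hm hv₁ hv₂ hcod hrest hlast

end Market


lemma le_phi1_of_cover {Sp : ℕ → ℕ → ℝ} {C : ℕ → Finset ℕ} {T : Finset ℕ} {n k P f : ℕ}
    {v₁ v₂ : ℝ} (hTk : T.card = k) (hk : 0 < k) (hv₂ : v₂ = k * v₁) (hv₁ : 0 ≤ v₁)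
    (hTn : T ⊆ Icc 1 n)
    (hcov : ∀ t, P < t → t ≤ f → ∃ i ∈ T, Sp i t = v₂)
    (hpad1 : ∀ t, 1 ≤ t → t ≤ P → ∀ i ∈ Icc 1 n, Sp i t = v₁)
    (hcode : ∀ t, P < t → t ≤ f → ∀ i ∈ Icc 1 n, Sp i t = if t - P ∈ C i then v₂ else 0)
    {t : ℕ} (ht : t ∈ Icc 1 f) : v₁ ≤ phi1 Sp T t := by
  obtain ⟨ht1, htf⟩ := mem_Icc.1 ht
  rcases le_or_gt t P with htP | htP
  · exact (phi1_eq_of_forall_eq (by omega) fun i hi => hpad1 t ht1 htP i (hTn hi)).ge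
  · obtain ⟨j, hj, hjv⟩ := hcov t htP htf
    have hprice : ∀ i ∈ T, 0 ≤ Sp i t := fun i hi => by
      rw [hcode t htP htf i (hTn hi)]
      split_ifs
      · rw [hv₂]; positivity
      · exact le_rfl
    calc v₁ = Sp j t / T.card := by
          rw [hjv, hv₂, hTk, mul_div_cancel_left₀ _ (by positivity)]
      _ ≤ phi1 Sp T t := div_card_le_phi1 hprice hj

lemma exists_padding_card_mul_phi1_le {Sp : ℕ → ℕ → ℝ} {T : Finset ℕ} {n m k P : ℕ} {v₁ : ℝ}
    (hTm : T ⊆ Icc 1 m) (hTk : T.card = k) (hTn : ¬ T ⊆ Icc 1 n) (hkm : n + k + 1 ≤ m)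
    (hkP : 2 * (k + 1) ≤ P) (hv₁ : 0 ≤ v₁)
    (hcod : ∀ t, 1 ≤ t → t ≤ P → ∀ i ∈ Icc 1 n, Sp i t = v₁)
    (hrest : ∀ t, 1 ≤ t → t ≤ P → t % 2 = 0 →
      ∀ i, n < i → i ≤ m → i ≠ min (n + t / 2) m → Sp i t = 0) :
    ∃ t, 1 ≤ t ∧ t ≤ P ∧ t % 2 = 0 ∧ k * phi1 Sp T t ≤ (k - 1) * v₁ := by
  obtain ⟨j, hjT, hjn⟩ := not_subset.1 hTn
  -- `T` has only `k` elements, so it misses one of the `k + 1` adjustment rows `n < r ≤ n + k + 1`.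
  obtain ⟨r, hr, hrT⟩ : ∃ r ∈ Icc (n + 1) (n + k + 1), r ∉ T := not_subset.1 fun h => by
    have := card_le_card h
    simp only [Nat.card_Icc, hTk] at this
    omega
  have hr' := mem_Icc.1 hr
  have hrow : min (n + 2 * (r - n) / 2) m = r := by omega
  have hprice : ∀ i ∈ T, n < i → Sp i (2 * (r - n)) = 0 := fun i hi hni =>
    hrest _ (by omega) (by omega) (by omega) i hni (mem_Icc.1 (hTm hi)).2
      (by rw [hrow]; rintro rfl; exact hrT hi)
  refine ⟨2 * (r - n), by omega, by omega, by omega, hTk ▸ card_mul_phi1_le (j := j) ?_ hjT ?_⟩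
  · intro i hi
    by_cases hin : i ≤ n
    · exact (hcod _ (by omega) (by omega) i (mem_Icc.2 ⟨(mem_Icc.1 (hTm hi)).1, hin⟩)).le
    · exact (hprice i hi (by omega)).le.trans hv₁
  · exact hprice j hjT (by have := mem_Icc.1 (hTm hjT); simp only [mem_Icc] at hjn; omega)

lemma subset_and_cover_of_le_phi1 {Sp : ℕ → ℕ → ℝ} {C : ℕ → Finset ℕ} {T : Finset ℕ}
    {n m k P f : ℕ} {v₁ v₂ : ℝ} {g : ℕ → ℝ} (hTm : T ⊆ Icc 1 m) (hTk : T.card = k) (hk : 1 ≤ k)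
    (hkm : n + k + 1 ≤ m) (hkP : 2 * (k + 1) ≤ P) (hPf : P ≤ f) (hv₁ : 0 ≤ v₁)
    (hpad1 : ∀ t, 1 ≤ t → t ≤ P → ∀ i ∈ Icc 1 n, Sp i t = v₁)
    (hpadEven : ∀ t, 1 ≤ t → t ≤ P → t % 2 = 0 →
      ∀ i, n < i → i ≤ m → i ≠ min (n + t / 2) m → Sp i t = 0)
    (hcode : ∀ t, P < t → t ≤ f → ∀ i ∈ Icc 1 n, Sp i t = if t - P ∈ C i then v₂ else 0)
    (hg : ∀ t ∈ Icc 1 f, (t ≤ P → t % 2 = 0) → (k - 1) * v₁ < k * g t)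
    (hperf : ∀ t ∈ Icc 1 f, g t ≤ phi1 Sp T t) :
    T ⊆ Icc 1 n ∧ ∀ t, P < t → t ≤ f → ∃ i ∈ T, Sp i t = v₂ := by
  have hk1 : (0 : ℝ) ≤ k - 1 := by rw [sub_nonneg]; exact_mod_cast hk
  have hTn : T ⊆ Icc 1 n := by
    by_contra hTn
    obtain ⟨t, ht1, htP, ht2, hle⟩ :=
      exists_padding_card_mul_phi1_le hTm hTk hTn hkm hkP hv₁ hpad1 hpadEven
    have ht : t ∈ Icc 1 f := mem_Icc.2 ⟨ht1, htP.trans hPf⟩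
    nlinarith [hg t ht fun _ => ht2, hperf t ht]
  refine ⟨hTn, fun t htP htf => ?_⟩
  have ht : t ∈ Icc 1 f := mem_Icc.2 ⟨by omega, htf⟩
  have hpos : 0 < phi1 Sp T t := by
    nlinarith [hg t ht fun h => absurd h htP.not_ge, hperf t ht, mul_nonneg hk1 hv₁]
  obtain ⟨i, hi, hne⟩ := exists_ne_zero_of_phi1_ne_zero hpos.ne'
  rw [hcode t htP htf i (hTn hi)] at hne
  exact ⟨i, hi, by rw [hcode t htP htf i (hTn hi), if_pos (not_not.1 fun h => hne (if_neg h))]⟩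

theorem stmt_6_general
    -- the minimum-cover instance
    (s n K : ℕ) (C : ℕ → Finset ℕ)
    (hK2 : 2 ≤ K) (hKn : K < n)
    -- the performance and volatility parameters
    (α β : ℝ) (hα : 0 < α) (hβ : 0 < β)
    -- constants of the construction
    (k P q B m f : ℕ) (hk : k = K)
    (hP : P = max (2 * (k + 1)) (2 * s))
    (hq : (q : ℤ) = ⌈max (1 + 4 / β) (Real.log (2 / α) / Real.log k)⌉)
    (hB : (B : ℤ) = ⌈α * (k : ℝ) ^ q⌉)
    (hm : m = n * B) (hf : f = P + s)
    (v₁ v₂ : ℝ) (hv₁ : v₁ = (B : ℝ) - 1) (hv₂ : v₂ = (k : ℝ) * ((B : ℝ) - 1))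
    -- the constructed prices
    (Sp : ℕ → ℕ → ℝ)
    (h0 : ∀ i ∈ Finset.Icc 1 m, Sp i 0 = v₁)
    (hpad1 : ∀ t, 1 ≤ t → t ≤ P → ∀ i ∈ Finset.Icc 1 n, Sp i t = v₁)
    (hpadEven : ∀ t, 1 ≤ t → t ≤ P → t % 2 = 0 →
      Sp (min (n + t / 2) m) t =
        ((m : ℝ) - n) * ((⌊(B : ℝ) / α⌋ : ℤ) - 1) ∧
      ∀ i, n < i → i ≤ m → i ≠ min (n + t / 2) m → Sp i t = 0)
    (hpadOdd : ∀ t, 1 ≤ t → t ≤ P → t % 2 = 1 →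
      ∀ i, n < i → i ≤ m → Sp i t = 0)
    (hcode : ∀ t, P < t → t ≤ f →
      (∀ i ∈ Finset.Icc 1 n, Sp i t = if t - P ∈ C i then v₂ else 0) ∧
      (∀ i, n < i → i < m → Sp i t = 0) ∧
      Sp m t = ((m : ℝ) - n) * ((⌊(B : ℝ) / α⌋ : ℤ) - (k : ℝ)) +
        (((Finset.Icc 1 n).filter (fun i => t - P ∉ C i)).card : ℝ) * v₂) :
    -- statement 6
    ∀ T ⊆ Finset.Icc 1 m, T.card = k →
      ((∀ t ∈ Finset.Icc 1 f,
          phi1 Sp T t / phi1 Sp T 0 ≥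
            α * (phi1 Sp (Finset.Icc 1 m) t / phi1 Sp (Finset.Icc 1 m) 0)) ↔
        (T ⊆ Finset.Icc 1 n ∧
          ∀ t, P < t → t ≤ f → ∃ i ∈ T, Sp i t = v₂)) := by
  intro T hTm hTk
  subst hk
  obtain ⟨hB2, hαk⟩ := two_le_and_mul_le_of_eq_ceil hα hβ hK2 hq hB
  have hkR : (2 : ℝ) ≤ k := by exact_mod_cast hK2
  have hv₁0 : 0 < v₁ := by linarith
  have hnm : n + k + 1 ≤ m := by
    have : 2 ≤ B := by exact_mod_cast hB2
    rw [hm]; nlinarith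
  have hM := phi1_market_eq (by omega) (by rw [hm]; push_cast; rfl) hv₁ (by rw [hv₂, hv₁])
    hpad1 hpadEven hpadOdd hcode
  obtain ⟨hμ_le, hμ_gt⟩ := alpha_mul_div_floor_le_and_lt hα (by positivity) hαk hv₁0
  have hodd_le : α * (v₁ / B) ≤ v₁ := by
    rw [mul_div_assoc', div_le_iff₀ (by positivity)]
    nlinarith [mul_le_mul_of_nonneg_left hkR hα.le]
  have hT0 : phi1 Sp T 0 = v₁ := phi1_eq_of_forall_eq (by omega) fun i hi => h0 i (hTm hi)
  have hM0 : phi1 Sp (Icc 1 m) 0 = v₁ := phi1_eq_of_forall_eq (by simp; omega) h0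
  simp only [hT0, hM0, ge_iff_le, ← mul_div_assoc, div_le_div_iff_of_pos_right hv₁0]
  constructor
  · refine subset_and_cover_of_le_phi1 hTm hTk (by omega) hnm (hP ▸ le_max_left _ _) (by omega)
      hv₁0.le hpad1 (fun t h1 h2 h3 => (hpadEven t h1 h2 h3).2) (fun t h1 h2 => (hcode t h1 h2).1)
      fun t ht hpar => ?_
    rwa [hM t ht, if_neg (by omega)]
  · rintro ⟨hTn, hcov⟩ t ht
    refine le_trans ?_ (le_phi1_of_cover hTk (by omega) (by rw [hv₂, hv₁]) hv₁0.le hTn hcov hpad1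
      (fun t h1 h2 => (hcode t h1 h2).1) ht)
    rw [hM t ht]
    split_ifs <;> assumption

theorem stmt_6
    -- the minimum-cover instance
    (s n K : ℕ) (hs : 1 ≤ s) (C : ℕ → Finset ℕ)
    (hC : ∀ i ∈ Finset.Icc 1 n, C i ⊆ Finset.Icc 1 s)
    (hK2 : 2 ≤ K) (hKn : K < n)
    -- the performance and volatility parameters
    (α β : ℝ) (hα : 0 < α) (hβ : 0 < β)
    -- constants of the construction
    (k P q B m f : ℕ) (hk : k = K)
    (hP : P = max (2 * (k + 1)) (2 * s))
    (hq : (q : ℤ) = ⌈max (1 + 4 / β) (Real.log (2 / α) / Real.log k)⌉)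
    (hB : (B : ℤ) = ⌈α * (k : ℝ) ^ q⌉)
    (hm : m = n * B) (hf : f = P + s)
    (v₁ v₂ : ℝ) (hv₁ : v₁ = (B : ℝ) - 1) (hv₂ : v₂ = (k : ℝ) * ((B : ℝ) - 1))
    -- the constructed prices
    (Sp : ℕ → ℕ → ℝ)
    (h0 : ∀ i ∈ Finset.Icc 1 m, Sp i 0 = v₁)
    (hpad1 : ∀ t, 1 ≤ t → t ≤ P → ∀ i ∈ Finset.Icc 1 n, Sp i t = v₁)
    (hpadEven : ∀ t, 1 ≤ t → t ≤ P → t % 2 = 0 →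
      Sp (min (n + t / 2) m) t =
        ((m : ℝ) - n) * ((⌊(B : ℝ) / α⌋ : ℤ) - 1) ∧
      ∀ i, n < i → i ≤ m → i ≠ min (n + t / 2) m → Sp i t = 0)
    (hpadOdd : ∀ t, 1 ≤ t → t ≤ P → t % 2 = 1 →
      ∀ i, n < i → i ≤ m → Sp i t = 0)
    (hcode : ∀ t, P < t → t ≤ f →
      (∀ i ∈ Finset.Icc 1 n, Sp i t = if t - P ∈ C i then v₂ else 0) ∧
      (∀ i, n < i → i < m → Sp i t = 0) ∧
      Sp m t = ((m : ℝ) - n) * ((⌊(B : ℝ) / α⌋ : ℤ) - (k : ℝ)) +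
        (((Finset.Icc 1 n).filter (fun i => t - P ∉ C i)).card : ℝ) * v₂) :
    -- statement 6
    ∀ T ⊆ Finset.Icc 1 m, T.card = k →
      ((∀ t ∈ Finset.Icc 1 f,
          phi1 Sp T t / phi1 Sp T 0 ≥
            α * (phi1 Sp (Finset.Icc 1 m) t / phi1 Sp (Finset.Icc 1 m) 0)) ↔
        (T ⊆ Finset.Icc 1 n ∧
          ∀ t, P < t → t ≤ f → ∃ i ∈ T, Sp i t = v₂)) :=
  stmt_6_general s n K C hK2 hKn α β hα hβ k P q B m f hk hP hq hB hm hf v₁ v₂ hv₁ hv₂ Sp h0 hpad1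
    hpadEven hpadOdd hcode
end

section
/- In the constructed instance for sacrificing return for less volatility, for every time t with P < t ≤ f, the market volatility satisfies Δ(M,t) > (2/β)·ln k. -/
open Finset Real

theorem sum_Icc_one_add_sum_Ioc {M : Type*} [AddCommMonoid M] (f : ℕ → M) {n m : ℕ}
    (h : n ≤ m) : ∑ i ∈ Icc 1 n, f i + ∑ i ∈ Ioc n m, f i = ∑ i ∈ Icc 1 m, f i := by
  simpa [← Icc_add_one_left_eq_Ioc 0] using sum_Ioc_consecutive f n.zero_le h

theorem le_sum_sq_sub_of_alternating (r : ℕ → ℝ) (L x : ℝ) (a N : ℕ)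
    (hr : ∀ j < N, r (a + 2 * j) = L ∧ r (a + 2 * j + 1) = -L) :
    2 * N * L ^ 2 ≤ ∑ i ∈ Ico a (a + 2 * N), (r i - x) ^ 2 := by
  induction N with
  | zero => simp
  | succ N ih =>
    obtain ⟨hL, hnegL⟩ := hr N N.lt_succ_self
    have hpair : 2 * L ^ 2 ≤ (L - x) ^ 2 + (-L - x) ^ 2 := by nlinarith [sq_nonneg x]
    rw [show a + 2 * (N + 1) = a + 2 * N + 1 + 1 by ring, sum_Ico_succ_top (by omega),
      sum_Ico_succ_top (by omega), hL, hnegL]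
    push_cast
    linarith [ih fun j hj => hr j (hj.trans N.lt_succ_self)]

theorem lt_vol_of_lt_sum_sq_sub (Sp : ℕ → ℕ → ℝ) (T : Finset ℕ) {t : ℕ} {c : ℝ} (hc : 0 ≤ c)
    (ht : 1 < t) (h : ∀ x, c ^ 2 * ((t : ℝ) - 1) < ∑ i ∈ Icc 1 t, (ret Sp T i - x) ^ 2) :
    c < vol Sp T t := by
  rw [vol, lt_sqrt hc, lt_div_iff₀ (sub_pos.2 (by exact_mod_cast ht))]
  exact h _

theorem ret_eq_log_div_sum (Sp : ℕ → ℕ → ℝ) {T : Finset ℕ} (hT : T.Nonempty) (t : ℕ) :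
    ret Sp T t = log ((∑ i ∈ T, Sp i t) / ∑ i ∈ T, Sp i (t - 1)) := by
  rw [ret, phi1, phi1, div_div_div_cancel_right₀ (by simpa using hT.card_pos.ne')]

theorem sum_Icc_eq_coding_add_single {Sp : ℕ → ℕ → ℝ} {n m j t : ℕ} {v : ℝ} (hnj : n < j)
    (hjm : j ≤ m) (hcoding : ∀ i ∈ Icc 1 n, Sp i t = v)
    (hzero : ∀ i, n < i → i ≤ m → i ≠ j → Sp i t = 0) :
    ∑ i ∈ Icc 1 m, Sp i t = n * v + Sp j t := by
  rw [← sum_Icc_one_add_sum_Ioc _ (hnj.le.trans hjm), sum_congr rfl hcoding,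
    sum_eq_single_of_mem j (mem_Ioc.2 ⟨hnj, hjm⟩)
      fun i hi hij => hzero i (mem_Ioc.1 hi).1 (mem_Ioc.1 hi).2 hij]
  simp

theorem ret_alternates_of_padding {Sp : ℕ → ℕ → ℝ} {n m P : ℕ} {v D : ℝ} (hnm : n < m)
    (hmn : (m : ℝ) - n = n * v) (hv : (n : ℝ) * v ≠ 0)
    (hcoding : ∀ t, 1 ≤ t → t ≤ P → ∀ i ∈ Icc 1 n, Sp i t = v)
    (hEven : ∀ t, 1 ≤ t → t ≤ P → t % 2 = 0 →
      Sp (min (n + t / 2) m) t = ((m : ℝ) - n) * (D - 1) ∧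
      ∀ i, n < i → i ≤ m → i ≠ min (n + t / 2) m → Sp i t = 0)
    (hOdd : ∀ t, 1 ≤ t → t ≤ P → t % 2 = 1 → ∀ i, n < i → i ≤ m → Sp i t = 0)
    (j : ℕ) (hj : 2 * j + 3 ≤ P) :
    ret Sp (Icc 1 m) (2 + 2 * j) = log D ∧ ret Sp (Icc 1 m) (2 + 2 * j + 1) = -log D := by
  have hM : (Icc 1 m).Nonempty := nonempty_Icc.2 (by omega)
  have sum_odd : ∀ t, 1 ≤ t → t ≤ P → t % 2 = 1 → ∑ i ∈ Icc 1 m, Sp i t = n * v := by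
    intro t h1 h2 h3
    rw [sum_Icc_eq_coding_add_single hnm le_rfl (hcoding t h1 h2)
      fun i hi him _ => hOdd t h1 h2 h3 i hi him, hOdd t h1 h2 h3 m hnm le_rfl, add_zero]
  have sum_even : ∀ t, 1 ≤ t → t ≤ P → t % 2 = 0 → ∑ i ∈ Icc 1 m, Sp i t = n * v * D := by
    intro t h1 h2 h3
    obtain ⟨hpeak, hzero⟩ := hEven t h1 h2 h3
    rw [sum_Icc_eq_coding_add_single (by omega) (min_le_right _ _) (hcoding t h1 h2) hzero, hpeak,
      hmn]
    ring
  constructor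
  · rw [ret_eq_log_div_sum Sp hM, sum_even _ (by omega) (by omega) (by omega),
      sum_odd _ (by omega) (by omega) (by omega), mul_div_cancel_left₀ _ hv]
  · rw [ret_eq_log_div_sum Sp hM, sum_odd _ (by omega) (by omega) (by omega),
      show 2 + 2 * j + 1 - 1 = 2 + 2 * j by omega, sum_even _ (by omega) (by omega) (by omega),
      div_mul_cancel_left₀ hv, log_inv]

theorem two_le_of_logb_le {α k B : ℝ} {q : ℕ} (hα : 0 < α) (hk : 1 < k)
    (hq : logb k (2 / α) ≤ q) (hB : α * k ^ q ≤ B) : 2 ≤ B := by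
  have := (logb_le_iff_le_rpow hk (by positivity)).1 hq
  rw [rpow_natCast, div_le_iff₀' hα] at this
  linarith

theorem mul_log_le_log_floor_div {α : ℝ} (hα : 0 < α) {k q B : ℕ} (hk : 1 < (k : ℝ))
    (hB : α * (k : ℝ) ^ q ≤ B) : q * log k ≤ log (⌊(B : ℝ) / α⌋ : ℤ) := by
  have hfloor : ((k ^ q : ℕ) : ℤ) ≤ ⌊(B : ℝ) / α⌋ :=
    Int.le_floor.2 (by push_cast; rw [le_div_iff₀ hα]; linarith)
  rw [← log_pow]
  exact log_le_log (by positivity) (by exact_mod_cast hfloor)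

theorem sq_mul_lt_two_mul_mul_sq {c L u : ℝ} {N : ℕ} (hc : 0 < c) (hL : 2 * c ≤ L)
    (hN : 1 ≤ N) (hu : u ≤ 3 * N + 2) : c ^ 2 * u < 2 * N * L ^ 2 := by
  have hNR : (1 : ℝ) ≤ N := by exact_mod_cast hN
  calc c ^ 2 * u ≤ c ^ 2 * (3 * N + 2) := by gcongr
    _ < 2 * N * (2 * c) ^ 2 := by nlinarith
    _ ≤ 2 * N * L ^ 2 := by gcongr

theorem stmt_10_general
    -- the minimum-cover instance
    (s n K : ℕ)
    (hK2 : 2 ≤ K) (hKn : K < n)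
    -- the performance and volatility parameters
    (α β : ℝ) (hα : 0 < α) (hβ : 0 < β)
    -- constants of the construction
    (k P q B m f : ℕ) (hk : k = K)
    (hP : P = max (2 * (k + 1)) (2 * s))
    (hq : (q : ℤ) = ⌈max (1 + 4 / β) (Real.log (2 / α) / Real.log k)⌉)
    (hB : (B : ℤ) = ⌈α * (k : ℝ) ^ q⌉)
    (hm : m = n * B) (hf : f = P + s)
    (v₁ : ℝ) (hv₁ : v₁ = (B : ℝ) - 1)
    -- the constructed prices
    (Sp : ℕ → ℕ → ℝ)
    (hpad1 : ∀ t, 1 ≤ t → t ≤ P → ∀ i ∈ Finset.Icc 1 n, Sp i t = v₁)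
    (hpadEven : ∀ t, 1 ≤ t → t ≤ P → t % 2 = 0 →
      Sp (min (n + t / 2) m) t =
        ((m : ℝ) - n) * ((⌊(B : ℝ) / α⌋ : ℤ) - 1) ∧
      ∀ i, n < i → i ≤ m → i ≠ min (n + t / 2) m → Sp i t = 0)
    (hpadOdd : ∀ t, 1 ≤ t → t ≤ P → t % 2 = 1 →
      ∀ i, n < i → i ≤ m → Sp i t = 0) :
    -- statement 10
    ∀ t, P < t → t ≤ f →
      vol Sp (Finset.Icc 1 m) t > (2 / β) * Real.log k := by
  intro t htP htf
  subst hk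
  have hk1 : (1 : ℝ) < k := by exact_mod_cast hK2
  have hqq : max (1 + 4 / β) (logb k (2 / α)) ≤ q := by exact_mod_cast hq ▸ Int.le_ceil _
  have hBq : α * k ^ q ≤ B := by exact_mod_cast hB ▸ Int.le_ceil _
  have hB2 : (2 : ℝ) ≤ B := two_le_of_logb_le hα hk1 ((le_max_right _ _).trans hqq) hBq
  have hlogk : 0 < log k := log_pos hk1
  have hlogD : 2 * (2 / β * log k) ≤ log (⌊(B : ℝ) / α⌋ : ℤ) := calc
    2 * (2 / β * log k) ≤ (1 + 4 / β) * log k := by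
      rw [show (1 + 4 / β) * log k = log k + 2 * (2 / β * log k) by ring]; linarith
    _ ≤ q * log k := by gcongr; exact (le_max_left _ _).trans hqq
    _ ≤ _ := mul_log_le_log_floor_div hα hk1 hBq
  obtain ⟨N, rfl, hN, hsN⟩ : ∃ N, P = 2 * N + 2 ∧ 1 ≤ N ∧ s ≤ N + 1 :=
    ⟨P / 2 - 1, by omega, by omega, by omega⟩
  have hBn : 2 ≤ B := by exact_mod_cast hB2
  have hnR : (0 : ℝ) < n := by exact_mod_cast (by omega : 0 < n)
  have hret := ret_alternates_of_padding (by rw [hm]; nlinarith)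
    (by rw [hm, hv₁]; push_cast; ring) (by rw [hv₁]; nlinarith) hpad1 hpadEven hpadOdd
  refine lt_vol_of_lt_sum_sq_sub Sp _ (by positivity) (by omega) fun x => ?_
  calc (2 / β * log k) ^ 2 * ((t : ℝ) - 1)
      < 2 * N * log (⌊(B : ℝ) / α⌋ : ℤ) ^ 2 :=
        sq_mul_lt_two_mul_mul_sq (by positivity) hlogD (by omega) (by
          rw [sub_le_iff_le_add]; exact_mod_cast (by omega : t ≤ 3 * N + 3))
    _ ≤ ∑ i ∈ Ico 2 (2 + 2 * N), (ret Sp (Icc 1 m) i - x) ^ 2 :=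
      le_sum_sq_sub_of_alternating _ _ x 2 N fun j hj => hret j (by omega)
    _ ≤ ∑ i ∈ Icc 1 t, (ret Sp (Icc 1 m) i - x) ^ 2 :=
      sum_le_sum_of_subset_of_nonneg (fun i hi => by simp only [mem_Ico, mem_Icc] at hi ⊢; omega)
        fun _ _ _ => sq_nonneg _

theorem stmt_10
    -- the minimum-cover instance
    (s n K : ℕ) (hs : 1 ≤ s) (C : ℕ → Finset ℕ)
    (hC : ∀ i ∈ Finset.Icc 1 n, C i ⊆ Finset.Icc 1 s)
    (hK2 : 2 ≤ K) (hKn : K < n)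
    -- the performance and volatility parameters
    (α β : ℝ) (hα : 0 < α) (hβ : 0 < β)
    -- constants of the construction
    (k P q B m f : ℕ) (hk : k = K)
    (hP : P = max (2 * (k + 1)) (2 * s))
    (hq : (q : ℤ) = ⌈max (1 + 4 / β) (Real.log (2 / α) / Real.log k)⌉)
    (hB : (B : ℤ) = ⌈α * (k : ℝ) ^ q⌉)
    (hm : m = n * B) (hf : f = P + s)
    (v₁ v₂ : ℝ) (hv₁ : v₁ = (B : ℝ) - 1) (hv₂ : v₂ = (k : ℝ) * ((B : ℝ) - 1))
    -- the constructed prices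
    (Sp : ℕ → ℕ → ℝ)
    (h0 : ∀ i ∈ Finset.Icc 1 m, Sp i 0 = v₁)
    (hpad1 : ∀ t, 1 ≤ t → t ≤ P → ∀ i ∈ Finset.Icc 1 n, Sp i t = v₁)
    (hpadEven : ∀ t, 1 ≤ t → t ≤ P → t % 2 = 0 →
      Sp (min (n + t / 2) m) t =
        ((m : ℝ) - n) * ((⌊(B : ℝ) / α⌋ : ℤ) - 1) ∧
      ∀ i, n < i → i ≤ m → i ≠ min (n + t / 2) m → Sp i t = 0)
    (hpadOdd : ∀ t, 1 ≤ t → t ≤ P → t % 2 = 1 →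
      ∀ i, n < i → i ≤ m → Sp i t = 0)
    (hcode : ∀ t, P < t → t ≤ f →
      (∀ i ∈ Finset.Icc 1 n, Sp i t = if t - P ∈ C i then v₂ else 0) ∧
      (∀ i, n < i → i < m → Sp i t = 0) ∧
      Sp m t = ((m : ℝ) - n) * ((⌊(B : ℝ) / α⌋ : ℤ) - (k : ℝ)) +
        (((Finset.Icc 1 n).filter (fun i => t - P ∉ C i)).card : ℝ) * v₂) :
    -- statement 10
    ∀ t, P < t → t ≤ f →
      vol Sp (Finset.Icc 1 m) t > (2 / β) * Real.log k :=
  stmt_10_general s n K hK2 hKn α β hα hβ k P q B m f hk hP hq hB hm hf v₁ hv₁ Sp hpad1 hpadEven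
    hpadOdd
end

section
/- Let ε > 0 be a real number, let n and k be positive integers, and set m = ⌈(1+ε)kn⌉. Let x₁,…,x_m be values in {0,1} with exactly kn of them equal to 1, so the market average is kn/m. Then for every nonempty subset T ⊆ {1,…,m} with |T| ≤ k, the outperformance condition ((∑_{i∈T} x_i)/|T|)/(kn/m) ≥ 1+ε holds if and only if x_i = 1 for every i ∈ T. -/
theorem stmt_11 (ε : ℝ) (hε : 0 < ε) (n k : ℕ) (hn : 0 < n) (hk : 0 < k)
    (m : ℕ) (hm : (m : ℤ) = ⌈(1 + ε) * k * n⌉)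
    (x : ℕ → ℝ) (hx : ∀ i ∈ Finset.Icc 1 m, x i = 0 ∨ x i = 1)
    (hcount : ((Finset.Icc 1 m).filter (fun i => x i = 1)).card = k * n)
    (T : Finset ℕ) (hT : T ⊆ Finset.Icc 1 m) (hTne : T.Nonempty)
    (hTk : T.card ≤ k) :
    ((∑ i ∈ T, x i) / T.card) / (((k : ℝ) * n) / m) ≥ 1 + ε ↔
      ∀ i ∈ T, x i = 1 := by
  have hk' : (0:ℝ) < k := by exact_mod_cast hk
  have hn' : (0:ℝ) < n := by exact_mod_cast hn
  have hn1 : (1:ℝ) ≤ n := by exact_mod_cast hn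
  have hkn : (0:ℝ) < (k:ℝ) * n := mul_pos hk' hn'
  have h1 : ((1+ε)*(k:ℝ)*n : ℝ) ≤ (m:ℝ) := by
    have := Int.le_ceil ((1+ε)*(k:ℝ)*(n:ℝ))
    rw [← hm] at this
    exact_mod_cast this
  have h2 : (m:ℝ) < (1+ε)*(k:ℝ)*n + 1 := by
    have := Int.ceil_lt_add_one ((1+ε)*(k:ℝ)*(n:ℝ))
    rw [← hm] at this
    exact_mod_cast this
  have hm0 : (0:ℝ) < m := lt_of_lt_of_le (by nlinarith) h1
  have htnat : 1 ≤ T.card := Finset.one_le_card.mpr hTne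
  have ht : (0:ℝ) < T.card := by exact_mod_cast Nat.lt_of_lt_of_le Nat.zero_lt_one htnat
  have htk : (T.card:ℝ) ≤ k := by exact_mod_cast hTk
  constructor
  · intro h i hi
    rcases hx i (hT hi) with h0 | h1'
    · exfalso
      have hS_le : ∑ j ∈ T, x j ≤ (T.card:ℝ) - 1 := by
        have heq : ∑ j ∈ T, x j = x i + ∑ j ∈ T.erase i, x j :=
          (Finset.add_sum_erase T x hi).symm
        rw [heq, h0, zero_add]
        calc ∑ j ∈ T.erase i, x j ≤ ∑ j ∈ T.erase i, 1 := by
              refine Finset.sum_le_sum fun j hj => ?_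
              rcases hx j (hT (Finset.mem_of_mem_erase hj)) with h|h <;> simp [h]
          _ = ((T.erase i).card : ℝ) := by simp
          _ = (T.card:ℝ) - 1 := by
              rw [Finset.card_erase_of_mem hi, Nat.cast_sub htnat]; norm_num
      rw [ge_iff_le, le_div_iff₀ (by positivity : (0:ℝ) < (k:ℝ)*n/m), le_div_iff₀ ht] at h
      have h3 : (1+ε)*((k:ℝ)*n)*T.card ≤ (∑ j ∈ T, x j) * m := by
        have := mul_le_mul_of_nonneg_right h hm0.le
        calc (1+ε)*((k:ℝ)*n)*T.card = (1+ε)*((k:ℝ)*n/m)*T.card * m := by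
              field_simp
          _ ≤ (∑ j ∈ T, x j) * m := this
      nlinarith [mul_le_mul_of_nonneg_right hS_le hm0.le,
        mul_lt_mul_of_pos_left h2 (show (0:ℝ) < T.card - 1 + 1 by linarith),
        mul_le_mul_of_nonneg_left (mul_le_mul_of_nonneg_left hn1 hk'.le)
          (show (0:ℝ) ≤ ε by linarith)]
    · exact h1'
  · intro h
    have hS : ∑ j ∈ T, x j = (T.card:ℝ) := by
      rw [Finset.sum_congr rfl h]; simp
    rw [hS, div_self ht.ne', ge_iff_le, le_div_iff₀ (by positivity : (0:ℝ) < (k:ℝ)*n/m)]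
    rw [← mul_div_assoc, div_le_one hm0]
    nlinarith
end

section
/- For every minimum-cover instance (S, C₁,…,C_n, K) and every real ε > 0, the constructed outperformance instance satisfies: there exist at most K of the sets C₁,…,C_n whose union is S if and only if there exists a nonempty subset T ⊆ {1,…,m} with |T| ≤ k such that Φ₁(T,t)/Φ₁(T,0) ≥ (1+ε)·Φ₁(M,t)/Φ₁(M,0) for every t = 1,…,f. -/
theorem stmt_13
    -- the minimum-cover instance
    (s n K : ℕ) (hs : 1 ≤ s) (C : ℕ → Finset ℕ)
    (hC : ∀ i ∈ Finset.Icc 1 n, C i ⊆ Finset.Icc 1 s)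
    (hK1 : 1 ≤ K) (hKn : K ≤ n)
    -- the outperformance bound
    (ε : ℝ) (hε : 0 < ε)
    -- constants of the construction
    (k m f : ℕ) (hk : k = K) (hm : (m : ℤ) = ⌈(1 + ε) * (k : ℝ) * n⌉)
    (hf : f = s + 1)
    -- the constructed prices
    (Sp : ℕ → ℕ → ℝ)
    (h0 : ∀ i ∈ Finset.Icc 1 m, Sp i 0 = 1)
    (hctrl : (∀ i, 1 ≤ i → i ≤ k * n → Sp i 1 = 1) ∧
      ∀ i, k * n < i → i ≤ m → Sp i 1 = 0)
    (helem : ∀ j ∈ Finset.Icc 1 s,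
      (∀ i, 1 ≤ i → i ≤ n → j ∈ C i → Sp i (j + 1) = 1) ∧
      Sp m (j + 1) =
        (n : ℝ) - ((Finset.Icc 1 n).filter (fun i => j ∈ C i)).card ∧
      ∀ i, 1 ≤ i → i < m → ¬(i ≤ n ∧ j ∈ C i) → Sp i (j + 1) = 0) :
    -- the equivalence: a small cover exists iff an outperforming portfolio exists
    (∃ I ⊆ Finset.Icc 1 n, I.card ≤ K ∧
        ∀ j ∈ Finset.Icc 1 s, ∃ i ∈ I, j ∈ C i) ↔
      (∃ T ⊆ Finset.Icc 1 m, T.Nonempty ∧ T.card ≤ k ∧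
        ∀ t ∈ Finset.Icc 1 f,
          phi1 Sp T t / phi1 Sp T 0 ≥
            (1 + ε) * (phi1 Sp (Finset.Icc 1 m) t / phi1 Sp (Finset.Icc 1 m) 0)) := by
  subst hf
  rw [hk] at hm hctrl ⊢
  -- numeric facts
  have hn1 : 1 ≤ n := le_trans hK1 hKn
  have hkn1 : 1 ≤ K * n := Nat.one_le_iff_ne_zero.mpr (by positivity)
  have hε0 : (0:ℝ) < 1 + ε := by linarith
  have hmge : (1 + ε) * (K:ℝ) * n ≤ (m:ℝ) := by
    have h := Int.le_ceil ((1 + ε) * (K:ℝ) * n)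
    rw [← hm] at h
    exact_mod_cast h
  have hmlt : (m:ℝ) < (1 + ε) * (K:ℝ) * n + 1 := by
    have h := Int.ceil_lt_add_one ((1 + ε) * (K:ℝ) * n)
    rw [← hm] at h
    exact_mod_cast h
  have hknR : (1:ℝ) ≤ (K:ℝ) * n := by exact_mod_cast hkn1
  have hknm : K * n < m := by
    have h : ((K * n : ℕ):ℝ) < (m:ℝ) := by push_cast; nlinarith
    exact_mod_cast h
  have hm1 : 1 ≤ m := le_trans hkn1 hknm.le
  have hnm : n < m := lt_of_le_of_lt (Nat.le_mul_of_pos_left n hK1) hknm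
  have hmpos : (0:ℝ) < m := by exact_mod_cast lt_of_lt_of_le one_pos hm1
  have hKpos : (0:ℝ) < K := by exact_mod_cast hK1
  have hKKn : (K:ℝ) ≤ (K:ℝ) * n := by
    have : (1:ℝ) ≤ (n:ℝ) := by exact_mod_cast hn1
    nlinarith
  have hMcard : (Finset.Icc 1 m).card = m := by rw [Nat.card_Icc]; omega
  -- term descriptions
  have hTerm1 : ∀ i, 1 ≤ i → i ≤ m → Sp i 1 = if i ≤ K * n then 1 else 0 := by
    intro i h1 h2
    by_cases h : i ≤ K * n
    · rw [if_pos h]; exact hctrl.1 i h1 h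
    · rw [if_neg h]; exact hctrl.2 i (by omega) h2
  have hTermJ : ∀ j ∈ Finset.Icc 1 s, ∀ i, 1 ≤ i → i < m →
      Sp i (j+1) = if i ≤ n ∧ j ∈ C i then 1 else 0 := by
    intro j hj i h1 h2
    obtain ⟨ha, hb, hc⟩ := helem j hj
    by_cases h : i ≤ n ∧ j ∈ C i
    · rw [if_pos h]; exact ha i h1 h.1 h.2
    · rw [if_neg h]; exact hc i h1 h2 h
  -- time-0 index of any portfolio
  have hT0 : ∀ T : Finset ℕ, T ⊆ Finset.Icc 1 m → T.Nonempty → phi1 Sp T 0 = 1 := by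
    intro T hsub hne
    unfold phi1
    rw [Finset.sum_congr rfl (fun i hi => h0 i (hsub hi)), Finset.sum_const,
      nsmul_eq_mul, mul_one]
    have hc : (0:ℝ) < T.card := by exact_mod_cast hne.card_pos
    field_simp
  -- sums of portfolios
  have hTsum1 : ∀ T : Finset ℕ, T ⊆ Finset.Icc 1 m →
      ∑ i ∈ T, Sp i 1 = ((T.filter (fun i => i ≤ K * n)).card : ℝ) := by
    intro T hsub
    rw [Finset.sum_congr rfl (fun i hi => by
      have h := hsub hi
      simp only [Finset.mem_Icc] at h
      exact hTerm1 i h.1 h.2)]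
    simp [Finset.sum_boole]
  have hTsumJ : ∀ j ∈ Finset.Icc 1 s, ∀ T : Finset ℕ, T ⊆ Finset.Icc 1 m → m ∉ T →
      ∑ i ∈ T, Sp i (j+1) = ((T.filter (fun i => i ≤ n ∧ j ∈ C i)).card : ℝ) := by
    intro j hj T hsub hm_not
    rw [Finset.sum_congr rfl (fun i hi => by
      have h := hsub hi
      simp only [Finset.mem_Icc] at h
      have : i < m := lt_of_le_of_ne h.2 (fun he => hm_not (he ▸ hi))
      exact hTermJ j hj i h.1 this)]
    simp [Finset.sum_boole]
  -- market index values
  have hM0 : phi1 Sp (Finset.Icc 1 m) 0 = 1 :=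
    hT0 _ (subset_refl _) ⟨1, by simp [Finset.mem_Icc, hm1]⟩
  have hM1 : phi1 Sp (Finset.Icc 1 m) 1 = (K:ℝ) * n / m := by
    unfold phi1
    rw [hTsum1 _ (subset_refl _)]
    have hfe : (Finset.Icc 1 m).filter (fun i => i ≤ K * n) = Finset.Icc 1 (K * n) := by
      ext a; simp only [Finset.mem_filter, Finset.mem_Icc]; omega
    rw [hfe, hMcard, Nat.card_Icc]
    push_cast [Nat.add_sub_cancel]
    ring
  have hMj : ∀ j ∈ Finset.Icc 1 s, phi1 Sp (Finset.Icc 1 m) (j+1) = (n:ℝ) / m := by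
    intro j hj
    have hins : Finset.Icc 1 m = insert m (Finset.Icc 1 (m-1)) := by
      ext a; simp only [Finset.mem_Icc, Finset.mem_insert]; omega
    have hmnot : m ∉ Finset.Icc 1 (m-1) := by simp only [Finset.mem_Icc]; omega
    have hfe : (Finset.Icc 1 (m-1)).filter (fun i => i ≤ n ∧ j ∈ C i)
        = (Finset.Icc 1 n).filter (fun i => j ∈ C i) := by
      ext a
      simp only [Finset.mem_filter, Finset.mem_Icc]
      constructor
      · rintro ⟨⟨h1, h2⟩, h3, h4⟩; exact ⟨⟨h1, h3⟩, h4⟩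
      · rintro ⟨⟨h1, h3⟩, h4⟩; exact ⟨⟨h1, by omega⟩, h3, h4⟩
    have hsum : ∑ i ∈ Finset.Icc 1 m, Sp i (j+1) = (n:ℝ) := by
      rw [hins, Finset.sum_insert hmnot, (helem j hj).2.1,
        hTsumJ j hj _ (by intro a ha; simp only [Finset.mem_Icc] at ha ⊢; omega) hmnot, hfe]
      ring
    unfold phi1
    rw [hsum, hMcard]
  constructor
  · -- cover → portfolio
    rintro ⟨I, hIsub, hIcard, hIcov⟩
    have hIne : I.Nonempty := by
      obtain ⟨i, hiI, _⟩ := hIcov 1 (by simp [Finset.mem_Icc]; omega)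
      exact ⟨i, hiI⟩
    have hIsubm : I ⊆ Finset.Icc 1 m := by
      intro a ha
      have := hIsub ha
      simp only [Finset.mem_Icc] at this ⊢
      omega
    have hIcpos : (0:ℝ) < I.card := by exact_mod_cast hIne.card_pos
    have hIcK : (I.card : ℝ) ≤ (K:ℝ) := by exact_mod_cast hIcard
    refine ⟨I, hIsubm, hIne, hIcard, ?_⟩
    intro t ht
    simp only [Finset.mem_Icc] at ht
    rw [hT0 I hIsubm hIne, hM0, div_one, div_one, ge_iff_le]
    by_cases ht1 : t = 1
    · subst ht1
      rw [hM1]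
      have hI1 : phi1 Sp I 1 = 1 := by
        unfold phi1
        rw [hTsum1 I hIsubm]
        have : I.filter (fun i => i ≤ K * n) = I := by
          apply Finset.filter_true_of_mem
          intro i hi
          have := hIsub hi
          simp only [Finset.mem_Icc] at this
          calc i ≤ n := this.2
            _ ≤ K * n := Nat.le_mul_of_pos_left n hK1
        rw [this]
        field_simp
      rw [hI1, ← mul_div_assoc, div_le_one hmpos]
      nlinarith
    · obtain ⟨j, hjt, hj1, hjs⟩ : ∃ j, t = j + 1 ∧ 1 ≤ j ∧ j ≤ s := ⟨t - 1, by omega, by omega, by omega⟩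
      subst hjt
      have hjmem : j ∈ Finset.Icc 1 s := by simp [Finset.mem_Icc]; omega
      rw [hMj j hjmem]
      -- the portfolio value is at least 1/|I|
      obtain ⟨i₀, hi₀I, hi₀C⟩ := hIcov j hjmem
      have hsum_ge : (1:ℝ) ≤ ∑ i ∈ I, Sp i (j+1) := by
        have h1 : Sp i₀ (j+1) = 1 := by
          have h := hIsub hi₀I
          simp only [Finset.mem_Icc] at h
          exact (helem j hjmem).1 i₀ h.1 h.2 hi₀C
        have hnn : ∀ i ∈ I, 0 ≤ Sp i (j+1) := by
          intro i hi
          have h := hIsub hi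
          simp only [Finset.mem_Icc] at h
          rw [hTermJ j hjmem i h.1 (by omega)]
          split <;> norm_num
        calc (1:ℝ) = Sp i₀ (j+1) := h1.symm
          _ ≤ ∑ i ∈ I, Sp i (j+1) := Finset.single_le_sum hnn hi₀I
      unfold phi1
      calc (1 + ε) * ((n:ℝ) / m) = ((1 + ε) * n) / m := by ring
        _ ≤ 1 / (K:ℝ) := by
            rw [div_le_div_iff₀ hmpos hKpos]
            nlinarith
        _ ≤ 1 / (I.card : ℝ) := by
            apply one_div_le_one_div_of_le hIcpos hIcK
        _ ≤ (∑ i ∈ I, Sp i (j+1)) / (I.card : ℝ) := by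
            gcongr
  · -- portfolio → cover
    rintro ⟨T, hTsub, hTne, hTcard, hT⟩
    have hTcpos : (0:ℝ) < T.card := by exact_mod_cast hTne.card_pos
    have hTcK : (T.card : ℝ) ≤ (K:ℝ) := by exact_mod_cast hTcard
    have hTc1 : (1:ℝ) ≤ (T.card : ℝ) := by exact_mod_cast hTne.card_pos
    -- first, m is not in T
    have hmT : m ∉ T := by
      intro hmem
      have h1 := hT 1 (by simp only [Finset.mem_Icc]; omega)
      rw [hT0 T hTsub hTne, hM0, hM1, div_one, div_one] at h1
      have hTφ : phi1 Sp T 1 = ((T.filter (fun i => i ≤ K * n)).card : ℝ) / T.card := by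
        unfold phi1; rw [hTsum1 T hTsub]
      rw [hTφ] at h1
      set c : ℝ := ((T.filter (fun i => i ≤ K * n)).card : ℝ) with hc
      have hcle : c ≤ (T.card : ℝ) - 1 := by
        have hss : T.filter (fun i => i ≤ K * n) ⊆ T.erase m := by
          intro a ha
          simp only [Finset.mem_filter] at ha
          exact Finset.mem_erase.mpr ⟨by omega, ha.1⟩
        have := Finset.card_le_card hss
        have herase : (T.erase m).card = T.card - 1 := Finset.card_erase_of_mem hmem
        rw [herase] at this
        have hcard1 : 1 ≤ T.card := hTne.card_pos
        have : ((T.filter (fun i => i ≤ K * n)).card : ℝ) ≤ ((T.card - 1 : ℕ) : ℝ) := by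
          exact_mod_cast this
        rwa [Nat.cast_sub hcard1, Nat.cast_one] at this
      rw [ge_iff_le, ← mul_div_assoc, div_le_div_iff₀ hmpos hTcpos] at h1
      -- h1 : (1+ε) * (K*n) * T.card ≤ c * m
      have hεkn : (0:ℝ) ≤ ε * ((K:ℝ) * n) := by positivity
      nlinarith [mul_le_mul_of_nonneg_right hcle hmpos.le,
        mul_le_mul_of_nonneg_left hmlt.le (by linarith : (0:ℝ) ≤ (T.card : ℝ) - 1)]
    refine ⟨T.filter (fun i => i ≤ n), ?_, ?_, ?_⟩
    · intro a ha
      simp only [Finset.mem_filter] at ha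
      have := hTsub ha.1
      simp only [Finset.mem_Icc] at this ⊢
      omega
    · exact le_trans (Finset.card_le_card (Finset.filter_subset _ _)) hTcard
    · intro j hj
      have hjs := hj
      simp only [Finset.mem_Icc] at hjs
      have h1 := hT (j+1) (by simp [Finset.mem_Icc]; omega)
      rw [hT0 T hTsub hTne, hM0, hMj j hj, div_one, div_one] at h1
      have hpos : (0:ℝ) < (1 + ε) * ((n:ℝ) / m) := by
        have hn0 : (0:ℝ) < (n:ℝ) := by exact_mod_cast hn1
        positivity
      have hsumpos : (0:ℝ) < ∑ i ∈ T, Sp i (j+1) := by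
        have : (0:ℝ) < phi1 Sp T (j+1) := lt_of_lt_of_le hpos h1
        unfold phi1 at this
        by_contra hle
        push_neg at hle
        have : phi1 Sp T (j+1) ≤ 0 := by
          unfold phi1
          exact div_nonpos_of_nonpos_of_nonneg hle hTcpos.le
        linarith [lt_of_lt_of_le hpos h1]
      rw [hTsumJ j hj T hTsub hmT] at hsumpos
      have hne' : (T.filter (fun i => i ≤ n ∧ j ∈ C i)).Nonempty := by
        rw [← Finset.card_pos]
        exact_mod_cast hsumpos
      obtain ⟨i, hi⟩ := hne'
      simp only [Finset.mem_filter] at hi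
      exact ⟨i, Finset.mem_filter.mpr ⟨hi.1, hi.2.1⟩, hi.2.2⟩
end

section
/- Let M be a nonempty finite market of m stocks with prices S'_{i,t} ≥ 0 for times t = 0,…,f such that S'_{i,0} = 1 for every i, and suppose there is a real A > 0 with Φ₁(M,t) = A for every t = 1,…,f (all columns have the same market average). Define new prices by S''_{i,0} = 1 and S''_{i,t} = 2^{S'_{i,t}} for t ≥ 1, and let ε be a real with 0 < ε < 1 and ε' = log₂(1/(1−ε))/A. Then for every nonempty subset M_k ⊆ M and every t = 1,…,f: the price-relative index of the new prices satisfies Φ₄(M_k,t)/Φ₄(M_k,0) ≥ (1−ε)·Φ₄(M,t)/Φ₄(M,0) if and only if the price-weighted index of the original prices satisfies Φ₁(M_k,t)/Φ₁(M_k,0) ≥ (1−ε')·Φ₁(M,t)/Φ₁(M,0). -/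
/-! Since `S''ᵢₜ = 2 ^ S'ᵢₜ` and all base prices are `1`, the geometric mean of the new prices
is `2` raised to the arithmetic mean of the old ones: `Φ₄(B,t) = 2 ^ Φ₁(B,t)`. Both sides of the
equivalence therefore compare `2 ^ Φ₁(Mₖ,t)` with `(1 - ε) · 2 ^ A = 2 ^ ((1 - ε') A)`, and
`x ↦ 2 ^ x` is strictly increasing. -/

open Finset Real

lemma Real.prod_rpow_rpow_one_div_card {ι : Type*} {b : ℝ} (hb : 0 < b) (B : Finset ι)
    (x : ι → ℝ) :
    (∏ i ∈ B, b ^ x i) ^ ((1 : ℝ) / #B) = b ^ ((∑ i ∈ B, x i) / #B) := by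
  rw [← rpow_sum_of_pos hb, ← rpow_mul hb.le, mul_one_div]

lemma Real.mul_rpow_le_rpow_iff {b c : ℝ} (hb : 1 < b) (hc : 0 < c) (a y : ℝ) :
    c * b ^ a ≤ b ^ y ↔ logb b c + a ≤ y := by
  rw [← rpow_logb (by linarith) hb.ne' hc, ← rpow_add (by linarith), rpow_logb (by linarith)
    hb.ne' hc, rpow_le_rpow_left_iff hb]

lemma Real.one_sub_logb_one_div_div_mul {b c a : ℝ} (ha : a ≠ 0) :
    (1 - logb b (1 / c) / a) * a = logb b c + a := by
  rw [one_div, logb_inv]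
  field_simp
  ring

theorem stmt_17_general {ι : Type*} (M : Finset ι) (hM : M.Nonempty)
    (f : ℕ) (S' : ι → ℕ → ℝ)
    (hS'0 : ∀ i ∈ M, S' i 0 = 1)
    (Φ₁ : Finset ι → ℕ → ℝ)
    (hΦ₁ : ∀ B : Finset ι, ∀ t, Φ₁ B t = (∑ i ∈ B, S' i t) / B.card)
    (A : ℝ) (hA : 0 < A) (hAvg : ∀ t, 1 ≤ t → t ≤ f → Φ₁ M t = A)
    (S'' : ι → ℕ → ℝ) (hS''0 : ∀ i ∈ M, S'' i 0 = 1)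
    (hS'' : ∀ i ∈ M, ∀ t, 1 ≤ t → t ≤ f → S'' i t = 2 ^ (S' i t))
    (Φ₄ : Finset ι → ℕ → ℝ)
    (hΦ₄ : ∀ B : Finset ι, ∀ t,
      Φ₄ B t = (∏ i ∈ B, S'' i t / S'' i 0) ^ ((1 : ℝ) / B.card))
    (ε ε' : ℝ) (hε1 : ε < 1)
    (hε' : ε' = Real.logb 2 (1 / (1 - ε)) / A)
    (Mk : Finset ι) (hMk : Mk ⊆ M) (hMkne : Mk.Nonempty)
    (t : ℕ) (ht1 : 1 ≤ t) (htf : t ≤ f) :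
    Φ₄ Mk t / Φ₄ Mk 0 ≥ (1 - ε) * (Φ₄ M t / Φ₄ M 0) ↔
      Φ₁ Mk t / Φ₁ Mk 0 ≥ (1 - ε') * (Φ₁ M t / Φ₁ M 0) := by
  have hΦ₁_zero : ∀ B ⊆ M, B.Nonempty → Φ₁ B 0 = 1 := fun B hB hBne => by
    rw [hΦ₁, sum_congr rfl fun i hi => hS'0 i (hB hi), sum_const, nsmul_one,
      div_self (by exact_mod_cast hBne.card_pos.ne')]
  have hΦ₄_zero : ∀ B ⊆ M, Φ₄ B 0 = 1 := fun B hB => by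
    rw [hΦ₄, prod_congr rfl fun i hi => by rw [hS''0 i (hB hi), div_one]]
    simp
  have hΦ₄_eq : ∀ B ⊆ M, Φ₄ B t = 2 ^ Φ₁ B t := fun B hB => by
    rw [hΦ₄, hΦ₁, ← prod_rpow_rpow_one_div_card two_pos]
    exact congrArg (· ^ _) <| prod_congr rfl fun i hi => by
      rw [hS''0 i (hB hi), div_one, hS'' i (hB hi) t ht1 htf]
  rw [hΦ₄_eq Mk hMk, hΦ₄_eq M le_rfl, hΦ₄_zero Mk hMk, hΦ₄_zero M le_rfl,
    hΦ₁_zero Mk hMk hMkne, hΦ₁_zero M le_rfl hM, hAvg t ht1 htf, hε']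
  simp only [div_one, ge_iff_le]
  rw [one_sub_logb_one_div_div_mul hA.ne']
  exact mul_rpow_le_rpow_iff one_lt_two (sub_pos.2 hε1) A _

theorem stmt_17 {ι : Type*} (M : Finset ι) (hM : M.Nonempty)
    (f : ℕ) (S' : ι → ℕ → ℝ) (hS' : ∀ i ∈ M, ∀ t ≤ f, 0 ≤ S' i t)
    (hS'0 : ∀ i ∈ M, S' i 0 = 1)
    (Φ₁ : Finset ι → ℕ → ℝ)
    (hΦ₁ : ∀ B : Finset ι, ∀ t, Φ₁ B t = (∑ i ∈ B, S' i t) / B.card)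
    (A : ℝ) (hA : 0 < A) (hAvg : ∀ t, 1 ≤ t → t ≤ f → Φ₁ M t = A)
    (S'' : ι → ℕ → ℝ) (hS''0 : ∀ i ∈ M, S'' i 0 = 1)
    (hS'' : ∀ i ∈ M, ∀ t, 1 ≤ t → t ≤ f → S'' i t = 2 ^ (S' i t))
    (Φ₄ : Finset ι → ℕ → ℝ)
    (hΦ₄ : ∀ B : Finset ι, ∀ t,
      Φ₄ B t = (∏ i ∈ B, S'' i t / S'' i 0) ^ ((1 : ℝ) / B.card))
    (ε ε' : ℝ) (hε0 : 0 < ε) (hε1 : ε < 1)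
    (hε' : ε' = Real.logb 2 (1 / (1 - ε)) / A)
    (Mk : Finset ι) (hMk : Mk ⊆ M) (hMkne : Mk.Nonempty)
    (t : ℕ) (ht1 : 1 ≤ t) (htf : t ≤ f) :
    Φ₄ Mk t / Φ₄ Mk 0 ≥ (1 - ε) * (Φ₄ M t / Φ₄ M 0) ↔
      Φ₁ Mk t / Φ₁ Mk 0 ≥ (1 - ε') * (Φ₁ M t / Φ₁ M 0) :=
  stmt_17_general M hM f S' hS'0 Φ₁ hΦ₁ A hA hAvg S'' hS''0 hS'' Φ₄ hΦ₄ ε ε' hε1 hε' Mk hMk hMkne t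
    ht1 htf
end

section
/- Let M be a nonempty finite market of m stocks with prices S'_{i,t} ≥ 0 for times t = 0,…,f such that S'_{i,0} = 1 for every i, and suppose there is a real A > 0 with Φ₁(M,t) = A for every t = 1,…,f (all columns have the same market average). Define new prices by S''_{i,0} = 1 and S''_{i,t} = 2^{S'_{i,t}} for t ≥ 1, and let ε > 0 be a real and ε' = log₂(1+ε)/A. Then for every nonempty subset M_k ⊆ M and every t = 1,…,f: the price-relative index of the new prices satisfies Φ₄(M_k,t)/Φ₄(M_k,0) ≥ (1+ε)·Φ₄(M,t)/Φ₄(M,0) if and only if the price-weighted index of the original prices satisfies Φ₁(M_k,t)/Φ₁(M_k,0) ≥ (1+ε')·Φ₁(M,t)/Φ₁(M,0). -/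
theorem stmt_18 {ι : Type*} (M : Finset ι) (hM : M.Nonempty)
    (f : ℕ) (S' : ι → ℕ → ℝ) (hS' : ∀ i ∈ M, ∀ t ≤ f, 0 ≤ S' i t)
    (hS'0 : ∀ i ∈ M, S' i 0 = 1)
    (Φ₁ : Finset ι → ℕ → ℝ)
    (hΦ₁ : ∀ B : Finset ι, ∀ t, Φ₁ B t = (∑ i ∈ B, S' i t) / B.card)
    (A : ℝ) (hA : 0 < A) (hAvg : ∀ t, 1 ≤ t → t ≤ f → Φ₁ M t = A)
    (S'' : ι → ℕ → ℝ) (hS''0 : ∀ i ∈ M, S'' i 0 = 1)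
    (hS'' : ∀ i ∈ M, ∀ t, 1 ≤ t → t ≤ f → S'' i t = 2 ^ (S' i t))
    (Φ₄ : Finset ι → ℕ → ℝ)
    (hΦ₄ : ∀ B : Finset ι, ∀ t,
      Φ₄ B t = (∏ i ∈ B, S'' i t / S'' i 0) ^ ((1 : ℝ) / B.card))
    (ε ε' : ℝ) (hε0 : 0 < ε)
    (hε' : ε' = Real.logb 2 (1 + ε) / A)
    (Mk : Finset ι) (hMk : Mk ⊆ M) (hMkne : Mk.Nonempty)
    (t : ℕ) (ht1 : 1 ≤ t) (htf : t ≤ f) :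
    Φ₄ Mk t / Φ₄ Mk 0 ≥ (1 + ε) * (Φ₄ M t / Φ₄ M 0) ↔
      Φ₁ Mk t / Φ₁ Mk 0 ≥ (1 + ε') * (Φ₁ M t / Φ₁ M 0) := by
  have two_pos : (0:ℝ) < 2 := by norm_num
  -- Φ₄ B 0 = 1 for B ⊆ M
  have h40 : ∀ B : Finset ι, B ⊆ M → Φ₄ B 0 = 1 := by
    intro B hB
    rw [hΦ₄]
    rw [Finset.prod_congr rfl (fun i hi => by rw [hS''0 i (hB hi)])]
    simp
  -- Φ₄ B t = 2 ^ Φ₁ B t (rpow) for B ⊆ M nonempty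
  have h4t : ∀ B : Finset ι, B ⊆ M → B.Nonempty → Φ₄ B t = (2:ℝ) ^ (Φ₁ B t) := by
    intro B hB hBne
    rw [hΦ₄, hΦ₁]
    rw [Finset.prod_congr rfl (fun i hi => by
      rw [hS''0 i (hB hi), hS'' i (hB hi) t ht1 htf, div_one])]
    rw [← Real.rpow_sum_of_pos two_pos, ← Real.rpow_mul (le_of_lt two_pos)]
    congr 1
    field_simp
  -- Φ₁ B 0 = 1 for B ⊆ M nonempty
  have h10 : ∀ B : Finset ι, B ⊆ M → B.Nonempty → Φ₁ B 0 = 1 := by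
    intro B hB hBne
    rw [hΦ₁]
    rw [Finset.sum_congr rfl (fun i hi => hS'0 i (hB hi))]
    have : (B.card : ℝ) ≠ 0 := by
      exact_mod_cast Finset.card_ne_zero_of_mem hBne.choose_spec
    simp [this]
  have hε1 : (0:ℝ) < 1 + ε := by linarith
  rw [h40 Mk hMk, h40 M (Finset.Subset.refl M), h4t Mk hMk hMkne,
    h4t M (Finset.Subset.refl M) hM, h10 Mk hMk hMkne, h10 M (Finset.Subset.refl M) hM,
    hAvg t ht1 htf, div_one, div_one, div_one, div_one]
  have key : (1 + ε) * (2:ℝ) ^ A = (2:ℝ) ^ (Real.logb 2 (1 + ε) + A) := by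
    rw [Real.rpow_add two_pos, Real.rpow_logb two_pos (by norm_num) hε1]
  rw [key]
  constructor
  · intro h
    have := (Real.rpow_le_rpow_left_iff (by norm_num : (1:ℝ) < 2)).mp h
    rw [hε', ge_iff_le]
    rw [add_mul, one_mul, div_mul_cancel₀ _ (ne_of_gt hA)]
    linarith
  · intro h
    rw [ge_iff_le, Real.rpow_le_rpow_left_iff (by norm_num : (1:ℝ) < 2)]
    rw [hε', ge_iff_le, add_mul, one_mul, div_mul_cancel₀ _ (ne_of_gt hA)] at h
    linarith
end

section
/- In the constructed instance for sacrificing return for less volatility, the market averages are: Φ₁(M,0) = B−1; Φ₁(M,t) = (B−1)/B for every odd t with 1 ≤ t ≤ P; and Φ₁(M,t) = ((B−1)/B)·⌊B/α⌋ for every even t with 2 ≤ t ≤ P and for every t with P < t ≤ f. -/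
/-!
At time `0` and at odd padding times only the rows priced `v₁ = B - 1` count, `m` resp. `n` of
them, and `m = n * B`. At the other times every column sums to `n * (B - 1) * c` with
`c = ⌊B / α⌋`: the coding rows contribute `n * (B - 1) * x` (`x = 1` at padding times, `x = k`
in coding columns once the last row gives back the `z_t * v₂` missing from the coding rows), and
the single nonzero padding row contributes `(m - n) * (c - x) = n * (B - 1) * (c - x)`.
-/

open Finset

lemma sum_Icc_one_eq_add_sum_Ioc {M : Type*} [AddCommMonoid M] (g : ℕ → M) {n m : ℕ}
    (h : n ≤ m) : ∑ i ∈ Icc 1 m, g i = ∑ i ∈ Icc 1 n, g i + ∑ i ∈ Ioc n m, g i := by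
  have hIoc : ∀ k, Icc 1 k = Ioc 0 k := fun k => Icc_add_one_left_eq_Ioc 0 k
  simp only [hIoc]
  exact (sum_Ioc_consecutive g (Nat.zero_le n) h).symm

lemma sum_ite_add_card_filter_not_mul {ι R : Type*} [NonAssocSemiring R] (s : Finset ι)
    (p : ι → Prop) [DecidablePred p] (v : R) :
    ∑ i ∈ s, (if p i then v else 0) + #(s.filter fun i => ¬ p i) * v = #s * v := by
  rw [← sum_filter, sum_const, nsmul_eq_mul, ← add_mul, ← Nat.cast_add,
    card_filter_add_card_filter_not]

lemma phi1_Icc_one (Sp : ℕ → ℕ → ℝ) (m t : ℕ) :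
    phi1 Sp (Icc 1 m) t = (∑ i ∈ Icc 1 m, Sp i t) / m := by
  simp [phi1]

section MarketSum

variable {Sp : ℕ → ℕ → ℝ} {n m t : ℕ}

lemma sum_Icc_eq_of_padding_zero (v : ℝ) (hnm : n ≤ m)
    (hcode : ∀ i ∈ Icc 1 n, Sp i t = v) (hpad : ∀ i, n < i → i ≤ m → Sp i t = 0) :
    ∑ i ∈ Icc 1 m, Sp i t = n * v := by
  rw [sum_Icc_one_eq_add_sum_Ioc _ hnm, sum_congr rfl hcode,
    sum_eq_zero fun i hi => hpad i (mem_Ioc.1 hi).1 (mem_Ioc.1 hi).2]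
  simp

/-- Without padding rows (`n = m`) the value `Sp j t` has to vanish, hence its form
`(m - n) * a`. -/
lemma sum_Ioc_eq_of_padding_single (j : ℕ) (a : ℝ) (hnm : n ≤ m)
    (hj : n < m → j ∈ Ioc n m) (hSj : Sp j t = (m - n) * a)
    (hpad : ∀ i, n < i → i ≤ m → i ≠ j → Sp i t = 0) :
    ∑ i ∈ Ioc n m, Sp i t = (m - n) * a := by
  rw [← hSj]
  refine sum_eq_single j (fun i hi hij => hpad i (mem_Ioc.1 hi).1 (mem_Ioc.1 hi).2 hij) ?_
  intro hjm
  obtain rfl : n = m := hnm.eq_or_lt.resolve_right (mt hj hjm)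
  simp [hSj]

lemma sum_Icc_eq_of_padding_single (v : ℝ) (j : ℕ) (a : ℝ) (hnm : n ≤ m)
    (hj : n < m → j ∈ Ioc n m) (hcode : ∀ i ∈ Icc 1 n, Sp i t = v)
    (hSj : Sp j t = (m - n) * a) (hpad : ∀ i, n < i → i ≤ m → i ≠ j → Sp i t = 0) :
    ∑ i ∈ Icc 1 m, Sp i t = n * v + (m - n) * a := by
  rw [sum_Icc_one_eq_add_sum_Ioc _ hnm, sum_congr rfl hcode,
    sum_Ioc_eq_of_padding_single j a hnm hj hSj hpad]
  simp

lemma sum_Icc_eq_of_coding (p : ℕ → Prop) [DecidablePred p] (v a : ℝ) (hnm : n ≤ m)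
    (hv : n = m → v = 0) (hcode : ∀ i ∈ Icc 1 n, Sp i t = if p i then v else 0)
    (hpad : ∀ i, n < i → i < m → Sp i t = 0)
    (hlast : Sp m t = (m - n) * a + #((Icc 1 n).filter fun i => ¬ p i) * v) :
    ∑ i ∈ Icc 1 m, Sp i t = n * v + (m - n) * a := by
  have hpadding : ∑ i ∈ Ioc n m, Sp i t = (m - n) * a +
      #((Icc 1 n).filter fun i => ¬ p i) * v := by
    rcases hnm.eq_or_lt with rfl | hlt
    · simp [hv rfl]
    rw [← hlast]
    refine sum_eq_single_of_mem m (right_mem_Ioc.2 hlt) fun i hi him => ?_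
    exact hpad i (mem_Ioc.1 hi).1 (lt_of_le_of_ne (mem_Ioc.1 hi).2 him)
  rw [sum_Icc_one_eq_add_sum_Ioc _ hnm, sum_congr rfl hcode, hpadding, ← add_assoc,
    add_right_comm, sum_ite_add_card_filter_not_mul, Nat.card_Icc, Nat.add_sub_cancel]

end MarketSum

lemma market_average_eq {n B : ℕ} (hn : n ≠ 0) (hB : B ≠ 0) (x c : ℝ) :
    (n * ((B - 1) * x) + ((n * B : ℕ) - n) * (c - x)) / (n * B : ℕ) = (B - 1) / B * c := by
  push_cast
  field_simp
  ring

lemma one_le_of_cast_eq_ceil {B : ℕ} {x : ℝ} (hB : (B : ℤ) = ⌈x⌉) (hx : 0 < x) : 1 ≤ B := by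
  exact_mod_cast hB ▸ Int.ceil_pos.2 hx

theorem stmt_19_general
    -- the minimum-cover instance
    (n K : ℕ) (C : ℕ → Finset ℕ)
    (hK2 : 2 ≤ K) (hKn : K < n)
    -- the performance and volatility parameters
    (α : ℝ) (hα : 0 < α)
    -- constants of the construction
    (k P q B m f : ℕ) (hk : k = K)
    (hB : (B : ℤ) = ⌈α * (k : ℝ) ^ q⌉)
    (hm : m = n * B)
    (v₁ v₂ : ℝ) (hv₁ : v₁ = (B : ℝ) - 1) (hv₂ : v₂ = (k : ℝ) * ((B : ℝ) - 1))
    -- the constructed prices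
    (Sp : ℕ → ℕ → ℝ)
    (h0 : ∀ i ∈ Finset.Icc 1 m, Sp i 0 = v₁)
    (hpad1 : ∀ t, 1 ≤ t → t ≤ P → ∀ i ∈ Finset.Icc 1 n, Sp i t = v₁)
    (hpadEven : ∀ t, 1 ≤ t → t ≤ P → t % 2 = 0 →
      Sp (min (n + t / 2) m) t =
        ((m : ℝ) - n) * ((⌊(B : ℝ) / α⌋ : ℤ) - 1) ∧
      ∀ i, n < i → i ≤ m → i ≠ min (n + t / 2) m → Sp i t = 0)
    (hpadOdd : ∀ t, 1 ≤ t → t ≤ P → t % 2 = 1 →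
      ∀ i, n < i → i ≤ m → Sp i t = 0)
    (hcode : ∀ t, P < t → t ≤ f →
      (∀ i ∈ Finset.Icc 1 n, Sp i t = if t - P ∈ C i then v₂ else 0) ∧
      (∀ i, n < i → i < m → Sp i t = 0) ∧
      Sp m t = ((m : ℝ) - n) * ((⌊(B : ℝ) / α⌋ : ℤ) - (k : ℝ)) +
        (((Finset.Icc 1 n).filter (fun i => t - P ∉ C i)).card : ℝ) * v₂) :
    -- statement 19
    phi1 Sp (Finset.Icc 1 m) 0 = (B : ℝ) - 1 ∧
    (∀ t, 1 ≤ t → t ≤ P → t % 2 = 1 →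
      phi1 Sp (Finset.Icc 1 m) t = ((B : ℝ) - 1) / B) ∧
    (∀ t, 2 ≤ t → t ≤ P → t % 2 = 0 →
      phi1 Sp (Finset.Icc 1 m) t =
        (((B : ℝ) - 1) / B) * ((⌊(B : ℝ) / α⌋ : ℤ) : ℝ)) ∧
    (∀ t, P < t → t ≤ f →
      phi1 Sp (Finset.Icc 1 m) t =
        (((B : ℝ) - 1) / B) * ((⌊(B : ℝ) / α⌋ : ℤ) : ℝ)) := by
  have hn : n ≠ 0 := by omega
  have hB1 : 1 ≤ B := one_le_of_cast_eq_ceil hB (by subst hk; positivity)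
  have hnm : n ≤ m := hm ▸ Nat.le_mul_of_pos_right n hB1
  subst hm
  refine ⟨?_, fun t ht1 htP hodd => ?_, fun t ht2 htP heven => ?_, fun t htP htf => ?_⟩
  · rw [phi1_Icc_one, sum_congr rfl h0, sum_const, Nat.card_Icc, Nat.add_sub_cancel, nsmul_eq_mul,
      mul_div_cancel_left₀ _ (by positivity), hv₁]
  · rw [phi1_Icc_one, sum_Icc_eq_of_padding_zero v₁ hnm (hpad1 t ht1 htP) (hpadOdd t ht1 htP hodd),
      hv₁]
    push_cast
    field_simp
  · obtain ⟨hSj, hpad⟩ := hpadEven t (by omega) htP heven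
    rw [phi1_Icc_one, sum_Icc_eq_of_padding_single v₁ _ _ hnm
      (fun hlt => mem_Ioc.2 ⟨lt_min (by omega) hlt, min_le_right _ _⟩) (hpad1 t (by omega) htP)
      hSj hpad, hv₁, ← market_average_eq hn (by omega) 1]
    push_cast
    ring
  · obtain ⟨hcoding, hpad, hlast⟩ := hcode t htP htf
    have hv₂0 : n = n * B → v₂ = 0 := fun h => by
      simp [hv₂, (Nat.mul_eq_left hn).1 h.symm]
    rw [phi1_Icc_one, sum_Icc_eq_of_coding _ v₂ _ hnm hv₂0 hcoding hpad hlast, hv₂,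
      ← market_average_eq hn (by omega) k]
    push_cast
    ring

theorem stmt_19
    -- the minimum-cover instance
    (s n K : ℕ) (hs : 1 ≤ s) (C : ℕ → Finset ℕ)
    (hC : ∀ i ∈ Finset.Icc 1 n, C i ⊆ Finset.Icc 1 s)
    (hK2 : 2 ≤ K) (hKn : K < n)
    -- the performance and volatility parameters
    (α β : ℝ) (hα : 0 < α) (hβ : 0 < β)
    -- constants of the construction
    (k P q B m f : ℕ) (hk : k = K)
    (hP : P = max (2 * (k + 1)) (2 * s))
    (hq : (q : ℤ) = ⌈max (1 + 4 / β) (Real.log (2 / α) / Real.log k)⌉)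
    (hB : (B : ℤ) = ⌈α * (k : ℝ) ^ q⌉)
    (hm : m = n * B) (hf : f = P + s)
    (v₁ v₂ : ℝ) (hv₁ : v₁ = (B : ℝ) - 1) (hv₂ : v₂ = (k : ℝ) * ((B : ℝ) - 1))
    -- the constructed prices
    (Sp : ℕ → ℕ → ℝ)
    (h0 : ∀ i ∈ Finset.Icc 1 m, Sp i 0 = v₁)
    (hpad1 : ∀ t, 1 ≤ t → t ≤ P → ∀ i ∈ Finset.Icc 1 n, Sp i t = v₁)
    (hpadEven : ∀ t, 1 ≤ t → t ≤ P → t % 2 = 0 →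
      Sp (min (n + t / 2) m) t =
        ((m : ℝ) - n) * ((⌊(B : ℝ) / α⌋ : ℤ) - 1) ∧
      ∀ i, n < i → i ≤ m → i ≠ min (n + t / 2) m → Sp i t = 0)
    (hpadOdd : ∀ t, 1 ≤ t → t ≤ P → t % 2 = 1 →
      ∀ i, n < i → i ≤ m → Sp i t = 0)
    (hcode : ∀ t, P < t → t ≤ f →
      (∀ i ∈ Finset.Icc 1 n, Sp i t = if t - P ∈ C i then v₂ else 0) ∧
      (∀ i, n < i → i < m → Sp i t = 0) ∧
      Sp m t = ((m : ℝ) - n) * ((⌊(B : ℝ) / α⌋ : ℤ) - (k : ℝ)) +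
        (((Finset.Icc 1 n).filter (fun i => t - P ∉ C i)).card : ℝ) * v₂) :
    -- statement 19
    phi1 Sp (Finset.Icc 1 m) 0 = (B : ℝ) - 1 ∧
    (∀ t, 1 ≤ t → t ≤ P → t % 2 = 1 →
      phi1 Sp (Finset.Icc 1 m) t = ((B : ℝ) - 1) / B) ∧
    (∀ t, 2 ≤ t → t ≤ P → t % 2 = 0 →
      phi1 Sp (Finset.Icc 1 m) t =
        (((B : ℝ) - 1) / B) * ((⌊(B : ℝ) / α⌋ : ℤ) : ℝ)) ∧
    (∀ t, P < t → t ≤ f →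
      phi1 Sp (Finset.Icc 1 m) t =
        (((B : ℝ) - 1) / B) * ((⌊(B : ℝ) / α⌋ : ℤ) : ℝ)) :=
  stmt_19_general n K C hK2 hKn α hα k P q B m f hk hB hm v₁ v₂ hv₁ hv₂ Sp h0 hpad1 hpadEven hpadOdd
    hcode
end
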